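/- arXiv:2102.13306 — 9 statements merged into one kernel-verified Lean document; each statement's English description precedes it below -/
import Mathlib

section
/- If G is a (1,0)-stable graph on n vertices (i.e., removing any single vertex does not decrease the independence number), then the independence number of G is at most ⌊n/2⌋. -/
open SimpleGraph Set

/-- The independence number of `G` restricted to a vertex subset `A`:
the largest cardinality of a finite set of vertices inside `A` that is
pairwise non-adjacent in `G`. -/
noncomputable def indepNumOn {V : Type*} (G : SimpleGraph V) (A : Set V) : ℕ :=
  sSup {n | ∃ s : Finset V, ↑s ⊆ A ∧ s.card = n ∧
    ∀ x ∈ s, ∀ y ∈ s, x ≠ y → ¬ G.Adj x y}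

/-- The independence number of `G`. -/
noncomputable def indepNum {V : Type*} (G : SimpleGraph V) : ℕ :=
  indepNumOn G Set.univ

/-- `G` is `(k, l)`-stable: removing any `k` vertices decreases the
independence number by at most `l`. -/
def IsStable {V : Type*} (G : SimpleGraph V) (k l : ℕ) : Prop :=
  ∀ S : Finset V, S.card = k → _root_.indepNum G ≤ indepNumOn G (↑S : Set V)ᶜ + l

/-! Stability says that every vertex is avoided by some maximum independent set. Start with
`X = U` a maximum independent set and keep `X ⊆ U` with no edges between `X` and `U`. Given
`v ∈ X` and a maximum independent set `I ∌ v`, replace `X` by `X ∩ I` and add to `U` the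
neighbours of `X \ I` inside `I`: they lie outside `U`, and by maximality of `I` there are at least
`#(X \ I)` of them. So `#X + #U` never decreases, and once `X` is empty, `2α ≤ #U ≤ n`. -/

open Finset

theorem indepNum_eq_simpleGraph_indepNum {V : Type*} (G : SimpleGraph V) :
    _root_.indepNum G = G.indepNum := by
  simp only [_root_.indepNum, indepNumOn, SimpleGraph.indepNum, isNIndepSet_iff,
    Set.subset_univ, true_and]
  congr! 3 with n
  exact exists_congr fun _ => and_comm

theorem exists_isIndepSet_card_eq_indepNumOn {V : Type*} [Finite V] (G : SimpleGraph V)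
    (A : Set V) : ∃ s : Finset V, ↑s ⊆ A ∧ #s = indepNumOn G A ∧ G.IsIndepSet ↑s := by
  have := Fintype.ofFinite V
  refine Nat.sSup_mem (s := {n | ∃ s : Finset V, ↑s ⊆ A ∧ #s = n ∧ G.IsIndepSet ↑s})
    ⟨0, ∅, by simp⟩ ⟨Fintype.card V, ?_⟩
  rintro _ ⟨s, -, rfl, -⟩
  exact card_le_univ s

namespace SimpleGraph

variable {V : Type*} {G : SimpleGraph V}

theorem isMaximumIndepSet_of_card_eq_indepNum [Finite V] {I : Finset V} (hI : G.IsIndepSet ↑I)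
    (hcard : #I = G.indepNum) : G.IsMaximumIndepSet I :=
  ⟨hI, fun _ ht => hcard ▸ ht.card_le_indepNum⟩

/-- `(I \ N) ∪ Y` is independent, where `N` is the set of neighbours of `Y` in `I`,
so maximality of `I` forces `#Y ≤ #N`. -/
theorem IsMaximumIndepSet.card_le_card_filter_adj [Finite V] [DecidableRel G.Adj]
    {I Y : Finset V} (hI : G.IsMaximumIndepSet I) (hY : G.IsIndepSet ↑Y) (hYI : Disjoint Y I) :
    #Y ≤ #{w ∈ I | ∃ y ∈ Y, G.Adj y w} := by
  classical
  set N := {w ∈ I | ∃ y ∈ Y, G.Adj y w}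
  set R := {w ∈ I | ¬∃ y ∈ Y, G.Adj y w}
  have hRY : G.IsIndepSet ↑(R ∪ Y) := by
    rw [coe_union, IsIndepSet, Set.pairwise_union]
    refine ⟨hI.isIndepSet.mono (filter_subset _ I), hY, fun r hr y hy _ => ?_⟩
    have hr := (mem_filter.1 hr).2
    exact ⟨fun h => hr ⟨y, hy, h.symm⟩, fun h => hr ⟨y, hy, h⟩⟩
  have hsplit : #N + #R = #I := card_filter_add_card_filter_not _
  have hdisj : Disjoint R Y := (hYI.mono_right (filter_subset _ I)).symm
  have := hI.maximum _ hRY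
  rw [card_union_of_disjoint hdisj] at this
  omega

section EmptyCore

variable [Fintype V] (havoid : ∀ v, ∃ I, v ∉ I ∧ G.IsMaximumIndepSet I)
include havoid

theorem card_add_card_le_card_of_forall_not_adj {X U : Finset V} (hXU : X ⊆ U)
    (hadj : ∀ x ∈ X, ∀ u ∈ U, ¬G.Adj x u) : #X + #U ≤ Fintype.card V := by
  classical
  induction X using Finset.strongInduction generalizing U with
  | H X ih =>
  obtain rfl | ⟨v, hv⟩ := X.eq_empty_or_nonempty
  · simpa using card_le_univ U
  obtain ⟨I, hvI, hI⟩ := havoid v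
  set N := {w ∈ I | ∃ y ∈ X \ I, G.Adj y w}
  have hYN : #(X \ I) ≤ #N := hI.card_le_card_filter_adj
    (fun x hx y hy _ => hadj x (sdiff_subset hx) y (hXU (sdiff_subset hy))) sdiff_disjoint
  have hNU : Disjoint N U := Finset.disjoint_left.2 fun w hw hwU => by
    obtain ⟨y, hy, hyw⟩ := (mem_filter.1 hw).2
    exact hadj y (sdiff_subset hy) w hwU hyw
  have hXI : X ∩ I ⊂ X := ssubset_of_subset_of_ne inter_subset_left fun h =>
    hvI (mem_of_mem_inter_right (h ▸ hv))
  have hind := ih (X ∩ I) hXI (U := U ∪ N) (inter_subset_left.trans (hXU.trans subset_union_left))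
    fun x hx u hu => by
      obtain hu | hu := mem_union.1 hu
      · exact hadj x (mem_of_mem_inter_left hx) u hu
      · exact fun h => hI.isIndepSet (mem_of_mem_inter_right hx) (mem_filter.1 hu).1 h.ne h
  calc #X + #U = #(X ∩ I) + #(X \ I) + #U := by rw [card_inter_add_card_sdiff]
    _ ≤ #(X ∩ I) + #(U ∪ N) := by rw [card_union_of_disjoint hNU.symm]; omega
    _ ≤ Fintype.card V := hind

theorem two_mul_indepNum_le_card : 2 * G.indepNum ≤ Fintype.card V := by
  obtain ⟨I, hI⟩ := G.maximumIndepSet_exists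
  have := card_add_card_le_card_of_forall_not_adj havoid subset_rfl
    fun x hx u hu h => hI.isIndepSet hx hu h.ne h
  rw [maximumIndepSet_card_eq_indepNum I hI] at this
  omega

end EmptyCore

end SimpleGraph

theorem stable_one_zero_indepNum_le {V : Type*} [Fintype V] (G : SimpleGraph V) (n : ℕ)
    (hn : Fintype.card V = n)
    (hstable : ∀ v : V, indepNumOn G ({v} : Set V)ᶜ = _root_.indepNum G) :
    _root_.indepNum G ≤ n / 2 := by
  have havoid (v : V) : ∃ I, v ∉ I ∧ G.IsMaximumIndepSet I := by
    obtain ⟨I, hIv, hcard, hI⟩ := exists_isIndepSet_card_eq_indepNumOn G {v}ᶜ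
    refine ⟨I, fun hv => hIv hv rfl, isMaximumIndepSet_of_card_eq_indepNum hI ?_⟩
    rw [hcard, hstable v, indepNum_eq_simpleGraph_indepNum]
  have := two_mul_indepNum_le_card havoid
  rw [indepNum_eq_simpleGraph_indepNum]
  omega
end

section
/- Let G be a (1,0)-stable graph and Y a maximum independent set of G. Then there is a matching in G saturating Y, i.e., an injection f : Y → V(G) \ Y such that each y ∈ Y is adjacent to f(y). -/
open SimpleGraph Set

/-!
Every independent set `S` of a `(1,0)`-stable graph satisfies Hall's condition `|N(S)| ≥ |S|`,
so Hall's theorem matches it into its neighbourhood. The condition is proved by strong induction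
on `S`: pick `y ∈ S` and a maximum independent set `I` avoiding `y`. The part `S ∩ I` is a
proper subset, so `|N(S ∩ I)| ≥ |S ∩ I|`; exchanging `I ∩ N(S \ I)` for `S \ I` in `I` shows
`|I ∩ N(S \ I)| ≥ |S \ I|`; and these two parts of `N(S)` are disjoint since `I` is independent.
-/

open Finset

section IndependenceNumber

variable {V : Type*} [Fintype V] {G : SimpleGraph V}

lemma bddAbove_card_indepSet_subset (A : Set V) :
    BddAbove {n | ∃ s : Finset V, ↑s ⊆ A ∧ #s = n ∧ ∀ x ∈ s, ∀ y ∈ s, x ≠ y → ¬ G.Adj x y} :=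
  ⟨Fintype.card V, by rintro n ⟨s, -, rfl, -⟩; exact s.card_le_univ⟩

lemma card_le_indepNum_of_isIndepSet {s : Finset V} (hs : G.IsIndepSet s) :
    #s ≤ _root_.indepNum G :=
  le_csSup (bddAbove_card_indepSet_subset _) ⟨s, subset_univ _, rfl, hs⟩

lemma exists_isIndepSet_notMem_card_eq_indepNum {v : V}
    (hv : indepNumOn G ({v} : Set V)ᶜ = _root_.indepNum G) :
    ∃ I : Finset V, v ∉ I ∧ G.IsIndepSet I ∧ #I = _root_.indepNum G := by
  obtain ⟨I, hIv, hIcard, hI⟩ : indepNumOn G ({v} : Set V)ᶜ ∈ _ :=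
    Nat.sSup_mem ⟨0, ∅, by simp, rfl, by simp⟩ (bddAbove_card_indepSet_subset _)
  exact ⟨I, fun h => hIv h rfl, hI, hIcard.trans hv⟩

end IndependenceNumber

section Neighborhoods

variable {V : Type*} [Fintype V] [DecidableEq V] {G : SimpleGraph V} [DecidableRel G.Adj]

-- `(I \ N(S)) ∪ S` is independent, hence no larger than the maximum independent set `I`.
lemma card_le_card_inter_biUnion_neighborFinset {I S : Finset V} (hI : G.IsIndepSet I)
    (hImax : #I = _root_.indepNum G) (hS : G.IsIndepSet S) (hSI : Disjoint S I) :
    #S ≤ #(I ∩ S.biUnion (G.neighborFinset ·)) := by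
  set N := S.biUnion (G.neighborFinset ·)
  have hK : G.IsIndepSet ↑(I \ N ∪ S) := by
    rw [coe_union]
    refine Set.pairwise_union.mpr ⟨hI.mono (by simp), hS, fun x hx z hz _ => ?_⟩
    have hxN : x ∉ N := (mem_sdiff.mp hx).2
    have hzx : ¬ G.Adj z x := fun h => hxN (mem_biUnion.mpr ⟨z, hz, by simpa using h⟩)
    exact ⟨fun h => hzx h.symm, hzx⟩
  have hdisj : Disjoint (I \ N) S := disjoint_of_subset_left sdiff_subset hSI.symm
  have hKle := card_le_indepNum_of_isIndepSet hK
  rw [card_union_of_disjoint hdisj] at hKle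
  have := card_sdiff_add_card_inter I N
  omega

lemma card_le_card_biUnion_neighborFinset
    (hstable : ∀ v : V, indepNumOn G ({v} : Set V)ᶜ = _root_.indepNum G)
    {S : Finset V} (hS : G.IsIndepSet S) : #S ≤ #(S.biUnion (G.neighborFinset ·)) := by
  induction S using Finset.strongInduction with
  | H S ih =>
    obtain rfl | ⟨y, hy⟩ := S.eq_empty_or_nonempty
    · simp
    obtain ⟨I, hyI, hI, hImax⟩ := exists_isIndepSet_notMem_card_eq_indepNum (hstable y)
    have hinter : #(S ∩ I) ≤ #((S ∩ I).biUnion (G.neighborFinset ·)) :=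
      ih _ (ssubset_of_subset_of_ne inter_subset_left
        fun h => hyI (mem_of_mem_inter_right (h ▸ hy))) (hS.mono (by simp))
    have hsdiff : #(S \ I) ≤ #(I ∩ (S \ I).biUnion (G.neighborFinset ·)) :=
      card_le_card_inter_biUnion_neighborFinset hI hImax (hS.mono (by simp)) sdiff_disjoint
    -- neighbours of vertices of `I` lie outside `I`
    have hdisj : Disjoint (I ∩ (S \ I).biUnion (G.neighborFinset ·))
        ((S ∩ I).biUnion (G.neighborFinset ·)) := by
      refine disjoint_left.mpr fun x hx hx' => ?_
      obtain ⟨a, ha, hax⟩ := mem_biUnion.mp hx'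
      rw [mem_neighborFinset] at hax
      exact hI (mem_of_mem_inter_right ha) (mem_of_mem_inter_left hx) hax.ne hax
    calc #S = #(S \ I) + #(S ∩ I) := (card_sdiff_add_card_inter S I).symm
      _ ≤ #(I ∩ (S \ I).biUnion (G.neighborFinset ·)) + #((S ∩ I).biUnion (G.neighborFinset ·)) :=
        Nat.add_le_add hsdiff hinter
      _ = #(I ∩ (S \ I).biUnion (G.neighborFinset ·) ∪ (S ∩ I).biUnion (G.neighborFinset ·)) :=
        (card_union_of_disjoint hdisj).symm
      _ ≤ #(S.biUnion (G.neighborFinset ·)) := card_le_card <| union_subset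
        (inter_subset_right.trans (biUnion_subset_biUnion_of_subset_left _ sdiff_subset))
        (biUnion_subset_biUnion_of_subset_left _ inter_subset_left)

lemma SimpleGraph.exists_injOn_adj_of_card_le_card_biUnion {Y : Finset V}
    (hall : ∀ s ⊆ Y, #s ≤ #(s.biUnion (G.neighborFinset ·))) :
    ∃ f : V → V, Set.InjOn f Y ∧ ∀ y ∈ Y, G.Adj y (f y) := by
  obtain ⟨g, hg, hgN⟩ :=
    (all_card_le_biUnion_card_iff_exists_injective fun y : Y => G.neighborFinset y).mp
      fun s => by
        have := hall (s.image Subtype.val) (image_subset_iff.mpr fun y _ => y.2)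
        rwa [image_biUnion, Finset.card_image_of_injective _ Subtype.val_injective] at this
  refine ⟨fun y => if hy : y ∈ Y then g ⟨y, hy⟩ else y, fun x hx y hy hxy => ?_, fun y hy => ?_⟩
  · simp only [mem_coe] at hx hy
    have : g ⟨x, hx⟩ = g ⟨y, hy⟩ := by simpa [hx, hy] using hxy
    exact congrArg Subtype.val (hg this)
  · simpa [hy] using hgN ⟨y, hy⟩

end Neighborhoods

theorem exists_matching_saturating_max_indep_general {V : Type*} [Fintype V] (G : SimpleGraph V)
    (hstable : ∀ v : V, indepNumOn G ({v} : Set V)ᶜ = _root_.indepNum G)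
    (Y : Finset V) (hind : ∀ x ∈ Y, ∀ y ∈ Y, x ≠ y → ¬ G.Adj x y) :
    ∃ f : V → V, Set.InjOn f ↑Y ∧ ∀ y ∈ Y, f y ∉ Y ∧ G.Adj y (f y) := by
  classical
  obtain ⟨f, hf, hadj⟩ := G.exists_injOn_adj_of_card_le_card_biUnion
    fun s hs => card_le_card_biUnion_neighborFinset hstable
      (Set.Pairwise.mono (by simpa using hs) hind)
  exact ⟨f, hf, fun y hy =>
    ⟨fun hfy => hind y hy (f y) hfy (hadj y hy).ne (hadj y hy), hadj y hy⟩⟩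

theorem exists_matching_saturating_max_indep {V : Type*} [Fintype V] (G : SimpleGraph V)
    (hstable : ∀ v : V, indepNumOn G ({v} : Set V)ᶜ = _root_.indepNum G)
    (Y : Finset V) (hind : ∀ x ∈ Y, ∀ y ∈ Y, x ≠ y → ¬ G.Adj x y)
    (hcard : Y.card = _root_.indepNum G) :
    ∃ f : V → V, Set.InjOn f ↑Y ∧ ∀ y ∈ Y, f y ∉ Y ∧ G.Adj y (f y) :=
  exists_matching_saturating_max_indep_general G hstable Y hind
end

section
/- For every even n ≥ 6, the wheel W_n (an (n−1)-cycle plus a vertex adjacent to all cycle vertices) is (2,0)-stable with α(W_n) = n/2 − 1. -/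
open SimpleGraph Set

/-- The cycle graph on `n` vertices. -/
def cycleG (n : ℕ) : SimpleGraph (ZMod n) :=
  SimpleGraph.fromRel (fun i j => i = j + 1)

/-- The wheel on `n` vertices: an `(n-1)`-cycle together with a hub vertex (`none`)
adjacent to all cycle vertices. -/
def wheelG (n : ℕ) : SimpleGraph (Option (ZMod (n - 1))) :=
  SimpleGraph.fromRel (fun a b => a = none ∨ ∃ i, a = some i ∧ b = some (i + 1))

/-!
The cycle `C_{n-1}` of the wheel has odd length `n - 1`. An independent set of the cycle is
disjoint from its rotation by one step, so it has at most `(n - 2) / 2` vertices, and an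
independent set containing the hub is just the hub. Conversely, the vertices at odd distance
`1, 3, …, n - 3` after a cycle vertex `c` form an independent set of that size which misses
`c` and every vertex at even distance after `c`. Of two distinct cycle vertices `a` and `b`,
one lies at even distance after the other, since the two distances add up to the odd `n - 1`;
starting at the right one of them gives a maximum independent set avoiding both.
-/

lemma indepNumOn_eq_card {V : Type*} {G : SimpleGraph V} {A : Set V} {s : Finset V}
    (hsA : ↑s ⊆ A) (hs : G.IsIndepSet ↑s)
    (hmax : ∀ t : Finset V, G.IsIndepSet ↑t → t.card ≤ s.card) :
    indepNumOn G A = s.card :=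
  IsGreatest.csSup_eq ⟨⟨s, hsA, rfl, fun _ hx _ hy => hs hx hy⟩,
    by rintro _ ⟨t, -, rfl, ht⟩; exact hmax t fun _ hx _ hy => ht _ hx _ hy⟩

lemma two_mul_card_le_of_disjoint_image {α : Type*} [Fintype α] [DecidableEq α]
    {f : α → α} (hf : f.Injective) {t : Finset α} (h : Disjoint t (t.image f)) :
    2 * t.card ≤ Fintype.card α :=
  calc 2 * t.card = (t ∪ t.image f).card := by
        rw [Finset.card_union_of_disjoint h, Finset.card_image_of_injective _ hf, two_mul]
    _ ≤ Fintype.card α := Finset.card_le_univ _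

section Cycle

variable {m : ℕ}

lemma cycleG_adj {i j : ZMod m} : (cycleG m).Adj i j ↔ i ≠ j ∧ (i = j + 1 ∨ j = i + 1) :=
  fromRel_adj _ _ _

lemma two_mul_card_le_of_isIndepSet_cycleG (hm : 1 < m) {t : Finset (ZMod m)}
    (ht : (cycleG m).IsIndepSet ↑t) : 2 * t.card ≤ m := by
  have : NeZero m := ⟨by omega⟩
  have : Fact (1 < m) := ⟨hm⟩
  refine (two_mul_card_le_of_disjoint_image (add_left_injective 1) ?_).trans (ZMod.card m).le
  rw [Finset.disjoint_right]
  intro _ hy_image hy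
  obtain ⟨x, hx, rfl⟩ := Finset.mem_image.1 hy_image
  exact ht hx hy (by simp) (cycleG_adj.2 ⟨by simp, .inr rfl⟩)

def oddArc (c : ZMod m) : Finset (ZMod m) :=
  (Finset.range ((m - 1) / 2)).image fun k => c + ((2 * k + 1 : ℕ) : ZMod m)

lemma card_oddArc (c : ZMod m) : (oddArc c).card = (m - 1) / 2 := by
  rw [oddArc, Finset.card_image_of_injOn, Finset.card_range]
  intro k hk l hl h
  simp only [Finset.coe_range, Set.mem_Iio] at hk hl
  have h' := congrArg ZMod.val (add_left_cancel h)
  rw [ZMod.val_natCast_of_lt (by omega), ZMod.val_natCast_of_lt (by omega)] at h'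
  omega

lemma isIndepSet_oddArc (c : ZMod m) : (cycleG m).IsIndepSet ↑(oddArc c) := by
  have hstep : ∀ k < (m - 1) / 2, ∀ l < (m - 1) / 2,
      c + ((2 * k + 1 : ℕ) : ZMod m) ≠ c + ((2 * l + 1 : ℕ) : ZMod m) + 1 := by
    intro k hk l hl h
    have h' : ((2 * k + 1 : ℕ) : ZMod m) = ((2 * l + 2 : ℕ) : ZMod m) := by
      push_cast at h ⊢
      linear_combination h
    have hval := congrArg ZMod.val h'
    rw [ZMod.val_natCast_of_lt (by omega), ZMod.val_natCast_of_lt (by omega)] at hval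
    omega
  rintro _ hx _ hy - hadj
  obtain ⟨k, hk, rfl⟩ := Finset.mem_image.1 hx
  obtain ⟨l, hl, rfl⟩ := Finset.mem_image.1 hy
  rw [Finset.mem_range] at hk hl
  rcases (cycleG_adj.1 hadj).2 with h | h
  exacts [hstep k hk l hl h, hstep l hl k hk h]

lemma notMem_oddArc_of_even {b c : ZMod m} (h : Even (b - c).val) : b ∉ oddArc c := by
  intro hb
  obtain ⟨k, hk, rfl⟩ := Finset.mem_image.1 hb
  rw [Finset.mem_range] at hk
  rw [add_sub_cancel_left, ZMod.val_natCast_of_lt (by omega)] at h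
  exact Nat.not_even_two_mul_add_one k h

lemma even_val_sub_or_even_val_sub (hm : Odd m) (a b : ZMod m) :
    Even (a - b).val ∨ Even (b - a).val := by
  have : NeZero m := ⟨hm.pos.ne'⟩
  rcases eq_or_ne (a - b) 0 with h | h
  · simp [h]
  have : NeZero (a - b) := ⟨h⟩
  refine (Nat.even_or_odd (a - b).val).imp_right fun hodd => ?_
  rw [← neg_sub, ZMod.val_neg_of_ne_zero]
  exact Nat.Odd.sub_odd hm hodd

lemma exists_oddArc_avoiding (hm : Odd m) {u v : Option (ZMod m)} (huv : u ≠ v) :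
    ∃ c, u ∉ (oddArc c).image some ∧ v ∉ (oddArc c).image some := by
  have hself (c : ZMod m) : c ∉ oddArc c := notMem_oddArc_of_even (by simp)
  rcases u with _ | a <;> rcases v with _ | b
  · exact absurd rfl huv
  · exact ⟨b, by simp, by simpa using hself b⟩
  · exact ⟨a, by simpa using hself a, by simp⟩
  · rcases even_val_sub_or_even_val_sub hm a b with h | h
    · exact ⟨b, by simpa using notMem_oddArc_of_even h, by simpa using hself b⟩
    · exact ⟨a, by simpa using hself a, by simpa using notMem_oddArc_of_even h⟩

end Cycle

section Wheel

variable {n : ℕ}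

lemma wheelG_adj_none_some (i : ZMod (n - 1)) : (wheelG n).Adj none (some i) := by
  simp [wheelG, fromRel_adj]

lemma wheelG_adj_some_some {i j : ZMod (n - 1)} :
    (wheelG n).Adj (some i) (some j) ↔ (cycleG (n - 1)).Adj i j := by
  simp [wheelG, cycleG_adj, fromRel_adj, or_comm]

lemma isIndepSet_image_some_iff {t : Set (ZMod (n - 1))} :
    (wheelG n).IsIndepSet (some '' t) ↔ (cycleG (n - 1)).IsIndepSet t := by
  rw [IsIndepSet, IsIndepSet, (Option.some_injective _).injOn.pairwise_image]
  simp only [Set.Pairwise, Function.onFun, wheelG_adj_some_some]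

lemma two_mul_card_le_of_isIndepSet_wheelG (hn : 3 ≤ n) {s : Finset (Option (ZMod (n - 1)))}
    (hs : (wheelG n).IsIndepSet ↑s) : 2 * s.card ≤ n - 1 := by
  by_cases hnone : none ∈ s
  · have hsub : s ⊆ {none} := by
      rintro (_ | i) hi
      · simp
      · exact absurd (wheelG_adj_none_some i) (hs hnone hi (by simp))
    have := Finset.card_le_card hsub
    rw [Finset.card_singleton] at this
    omega
  · rw [← Finset.card_eraseNone_of_not_mem hnone]
    refine two_mul_card_le_of_isIndepSet_cycleG (by omega) (isIndepSet_image_some_iff.1 ?_)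
    rw [Finset.coe_eraseNone]
    exact hs.mono (Set.image_preimage_subset _ _)

lemma indepNumOn_wheelG_eq (heven : Even n) (hn : 4 ≤ n) {A : Set (Option (ZMod (n - 1)))}
    {c : ZMod (n - 1)} (hA : ↑((oddArc c).image some) ⊆ A) :
    indepNumOn (wheelG n) A = n / 2 - 1 := by
  have hcard : ((oddArc c).image some).card = n / 2 - 1 := by
    rw [Finset.card_image_of_injective _ (Option.some_injective _), card_oddArc]
    omega
  rw [← hcard]
  refine indepNumOn_eq_card hA ?_ fun t ht => ?_
  · rw [Finset.coe_image]
    exact isIndepSet_image_some_iff.2 (isIndepSet_oddArc c)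
  · have := two_mul_card_le_of_isIndepSet_wheelG (by omega) ht
    obtain ⟨r, rfl⟩ := heven
    omega

end Wheel

theorem even_wheel_stable_two_zero (n : ℕ) (heven : Even n) (hn : 6 ≤ n) :
    _root_.indepNum (wheelG n) = n / 2 - 1 ∧
      ∀ u v : Option (ZMod (n - 1)), u ≠ v →
        indepNumOn (wheelG n) ({u, v} : Set (Option (ZMod (n - 1))))ᶜ = _root_.indepNum (wheelG n) := by
  have hα : _root_.indepNum (wheelG n) = n / 2 - 1 :=
    indepNumOn_wheelG_eq heven (by omega) (c := 0) (Set.subset_univ _)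
  refine ⟨hα, fun u v huv => ?_⟩
  obtain ⟨c, hu, hv⟩ := exists_oddArc_avoiding (Nat.Even.sub_odd (by omega) heven odd_one) huv
  rw [hα]
  refine indepNumOn_wheelG_eq heven (by omega) (c := c) fun x hx => ?_
  rintro (rfl | rfl)
  exacts [hu hx, hv hx]
end

section
/- There is no 6-vertex tight (3,0)-stable graph; i.e., no graph G on 6 vertices with α(G) = 2 such that removing any 3 vertices leaves independence number 2. -/
open SimpleGraph Set

/-!
A graph on six vertices contains a triangle or an independent set of size three, by `R(3,3) = 6`.
Since `α(G) = 2` rules out the latter, there is a triangle, and deleting the three vertices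
outside it leaves a clique, whose independence number is `1`.
-/

namespace SimpleGraph

variable {V : Type*} (G : SimpleGraph V)

lemma exists_isNClique_or_isNIndepSet_three_of_adj {v : V} {T : Finset V} (hT : T.card = 3)
    (hv : ∀ w ∈ T, G.Adj v w) : ∃ s, G.IsNClique 3 s ∨ G.IsNIndepSet 3 s := by
  classical
  obtain ⟨a, b, c, hab, hac, hbc, rfl⟩ := Finset.card_eq_three.mp hT
  have ha : G.Adj v a := hv a (by simp)
  have hb : G.Adj v b := hv b (by simp)
  have hc : G.Adj v c := hv c (by simp)
  by_cases h₁ : G.Adj a b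
  · exact ⟨{v, a, b}, .inl (is3Clique_triple_iff.mpr ⟨ha, hb, h₁⟩)⟩
  by_cases h₂ : G.Adj a c
  · exact ⟨{v, a, c}, .inl (is3Clique_triple_iff.mpr ⟨ha, hc, h₂⟩)⟩
  by_cases h₃ : G.Adj b c
  · exact ⟨{v, b, c}, .inl (is3Clique_triple_iff.mpr ⟨hb, hc, h₃⟩)⟩
  refine ⟨{a, b, c}, .inr ?_⟩
  rw [← isNClique_compl, is3Clique_triple_iff]
  exact ⟨⟨hab, h₁⟩, ⟨hac, h₂⟩, ⟨hbc, h₃⟩⟩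

/-- The Ramsey number `R(3,3)` is at most `6`. -/
theorem exists_isNClique_or_isNIndepSet_three [Fintype V] (hV : 6 ≤ Fintype.card V) :
    ∃ s, G.IsNClique 3 s ∨ G.IsNIndepSet 3 s := by
  classical
  obtain ⟨v⟩ : Nonempty V := Fintype.card_pos_iff.mp (by omega)
  have hdeg : Gᶜ.degree v = Fintype.card V - 1 - G.degree v := G.degree_compl v
  by_cases hG : 3 ≤ G.degree v
  · obtain ⟨T, hTv, hT⟩ := Finset.exists_subset_card_eq hG
    exact G.exists_isNClique_or_isNIndepSet_three_of_adj hT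
      fun w hw ↦ (G.mem_neighborFinset v w).mp (hTv hw)
  · obtain ⟨T, hTv, hT⟩ := Finset.exists_subset_card_eq (show 3 ≤ Gᶜ.degree v by omega)
    obtain ⟨s, hs⟩ := Gᶜ.exists_isNClique_or_isNIndepSet_three_of_adj hT
      fun w hw ↦ (Gᶜ.mem_neighborFinset v w).mp (hTv hw)
    rw [isNClique_compl, isNIndepSet_compl] at hs
    exact ⟨s, hs.symm⟩

end SimpleGraph

section indepNumOn

variable {V : Type*} {G : SimpleGraph V} {A : Set V}

lemma le_indepNumOn [Finite V] {s : Finset V} (hsA : ↑s ⊆ A) (hs : G.IsIndepSet s) :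
    s.card ≤ indepNumOn G A := by
  have := Fintype.ofFinite V
  refine le_csSup ⟨Fintype.card V, ?_⟩ ⟨s, hsA, rfl, fun x hx y hy ↦ hs hx hy⟩
  rintro n ⟨t, -, rfl, -⟩
  exact t.card_le_univ

lemma indepNumOn_le_one_of_isClique (hA : G.IsClique A) : indepNumOn G A ≤ 1 := by
  refine csSup_le ⟨0, ∅, by simp, rfl, by simp⟩ ?_
  rintro n ⟨s, hsA, rfl, hs⟩
  refine Finset.card_le_one.mpr fun x hx y hy ↦ ?_
  by_contra hxy
  exact hs x hx y hy hxy (hA (hsA hx) (hsA hy) hxy)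

end indepNumOn

theorem no_six_vertex_tight_three_zero :
    ¬ ∃ G : SimpleGraph (Fin 6), _root_.indepNum G = 2 ∧
      ∀ S : Finset (Fin 6), S.card = 3 → indepNumOn G (↑S : Set (Fin 6))ᶜ = 2 := by
  rintro ⟨G, hα, hS⟩
  obtain ⟨s, hs | hs⟩ := G.exists_isNClique_or_isNIndepSet_three (by simp)
  · have hcard : sᶜ.card = 3 := by rw [Finset.card_compl, hs.card_eq]; rfl
    have h := hS sᶜ hcard
    rw [Finset.coe_compl, compl_compl] at h
    have := indepNumOn_le_one_of_isClique hs.isClique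
    omega
  · have := le_indepNumOn (subset_univ _) hs.isIndepSet
    rw [hs.card_eq] at this
    unfold _root_.indepNum at hα
    omega
end

section
/- For m ≥ 3, let G_m be the circulant graph on vertex set ℤ/(2m²+2m)ℤ with i ∼ j iff i−j ≡ ±m or ±(m+1) (mod 2m²+2m). Then α(G_m) = m². -/
/-! Upper bound: let `A` be independent, `R = A ∪ (A + 1)` and `c = 2m + 1`. The set `A` is
disjoint from both `R + m` and `R - (m + 1)`, and these two translates meet exactly in the
translate of `{r ∈ R | r + c ∈ R}`. Counting gives `2|A| + |E| + |D| ≤ n`, where `E` and `D`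
are the ends of the runs of `A` along `1` and of `R` along `c`. Since `a + m ∉ A` and
`a + m c = a - m ∉ R` for `a ∈ A`, every `a` reaches such an end within `m` steps, so
`|A| ≤ m |E|` and `|A| ≤ m |D|`; hence `(2m + 2) |A| ≤ m n = (2m + 2) m²` for
`n = 2m² + 2m`.

Lower bound: the `m²` points `k (2m + 2) + r` with `k, r < m` reduce modulo `2m + 2` to `r`,
and differences of such residues never equal `±m` or `±(m + 1)`. -/

open SimpleGraph Set

/-- The circulant graph on `ℤ/(2m²+2m)ℤ` with connection set `{±m, ±(m+1)}`. -/
def circG (m : ℕ) : SimpleGraph (ZMod (2 * m ^ 2 + 2 * m)) :=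
  SimpleGraph.fromRel (fun i j =>
    i - j = (m : ZMod (2 * m ^ 2 + 2 * m)) ∨ i - j = (m : ZMod (2 * m ^ 2 + 2 * m)) + 1)

section RunEnds

variable {G : Type*} [AddGroup G]

theorem exists_lt_add_nsmul_mem_and_not_mem {S : Set G} {a d : G} {m : ℕ} (ha : a ∈ S)
    (hm : a + m • d ∉ S) : ∃ k < m, a + k • d ∈ S ∧ a + (k + 1) • d ∉ S := by
  by_contra! h
  have hmem : ∀ k ≤ m, a + k • d ∈ S := by
    intro k hk
    induction k with
    | zero => simpa using ha
    | succ k ih => exact h k hk (ih (by omega))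
  exact hm (hmem m le_rfl)

variable [DecidableEq G]

def runEnds (S : Finset G) (d : G) : Finset G := S.filter (fun s => s + d ∉ S)

theorem card_union_image_add_right (S : Finset G) (d : G) :
    (S ∪ S.image (· + d)).card = S.card + (runEnds S d).card := by
  have hnew : S.image (· + d) \ S = (runEnds S d).image (· + d) := by
    ext x
    simp only [runEnds, Finset.mem_sdiff, Finset.mem_image, Finset.mem_filter]
    constructor
    · rintro ⟨⟨s, hs, rfl⟩, hx⟩
      exact ⟨s, ⟨hs, hx⟩, rfl⟩
    · rintro ⟨s, ⟨hs, hx⟩, rfl⟩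
      exact ⟨⟨s, hs, rfl⟩, hx⟩
  rw [← Finset.union_sdiff_self_eq_union, Finset.card_union_of_disjoint Finset.disjoint_sdiff,
    hnew, Finset.card_image_of_injective _ (add_left_injective d)]

/-- Each element of `A` reaches the end of its run in `S` after fewer than `m` steps. -/
theorem card_le_mul_card_runEnds {S A : Finset G} {d : G} {m : ℕ} (hAS : A ⊆ S)
    (hA : ∀ a ∈ A, a + m • d ∉ S) : A.card ≤ m * (runEnds S d).card := by
  have hcover : A ⊆ (Finset.range m).biUnion fun k : ℕ => (runEnds S d).image (· - k • d) := by
    intro a ha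
    obtain ⟨k, hk, hin, hout⟩ :=
      exists_lt_add_nsmul_mem_and_not_mem (S := (S : Set G)) (hAS ha) (hA a ha)
    simp only [Finset.mem_biUnion, Finset.mem_range, Finset.mem_image]
    refine ⟨k, hk, a + k • d, ?_, add_sub_cancel_right a _⟩
    rw [succ_nsmul, ← add_assoc] at hout
    exact Finset.mem_filter.2 ⟨hin, hout⟩
  calc A.card ≤ _ := Finset.card_le_card hcover
    _ ≤ m * (runEnds S d).card := by
      simpa using Finset.card_biUnion_le_card_mul (Finset.range m) _ _
        fun k _ => Finset.card_image_le

end RunEnds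

section DifferenceAvoiding

variable {G : Type*} [AddCommGroup G] [DecidableEq G] {A : Finset G} {u : G} {m : ℕ}

theorem sub_ne_of_mem_union_image_add
    (hA : ∀ a ∈ A, ∀ b ∈ A, b - a ≠ m • u ∧ b - a ≠ (m + 1) • u) {a r : G} (ha : a ∈ A)
    (hr : r ∈ A ∪ A.image (· + u)) : a - r ≠ m • u ∧ r - a ≠ (m + 1) • u := by
  rcases Finset.mem_union.1 hr with hr | hr
  · exact ⟨(hA r hr a ha).1, (hA a ha r hr).2⟩
  · obtain ⟨b, hb, rfl⟩ := Finset.mem_image.1 hr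
    refine ⟨fun h => (hA b hb a ha).2 ?_, fun h => (hA a ha b hb).1 ?_⟩
    · rw [succ_nsmul, ← h]; abel
    · exact add_right_cancel (b := u) (by rw [← succ_nsmul, ← h]; abel)

variable [Fintype G]

theorem two_mul_card_add_card_runEnds_le
    (hA : ∀ a ∈ A, ∀ b ∈ A, b - a ≠ m • u ∧ b - a ≠ (m + 1) • u) :
    2 * A.card + (runEnds A u).card
      + (runEnds (A ∪ A.image (· + u)) ((2 * m + 1) • u)).card ≤ Fintype.card G := by
  set R := A ∪ A.image (· + u)
  set c := (2 * m + 1) • u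
  have hshift : R.image (· + m • u) ∪ R.image (· - (m + 1) • u)
      = (R ∪ R.image (· + c)).image (· - (m + 1) • u) := by
    rw [Finset.image_union R, Finset.image_image, Finset.union_comm]
    congr 2
    funext r
    simp only [Function.comp_apply, c]
    rw [add_sub_assoc, show 2 * m + 1 = m + (m + 1) by ring, add_nsmul, add_sub_cancel_right]
  have hdisj : Disjoint A (R.image (· + m • u) ∪ R.image (· - (m + 1) • u)) := by
    rw [Finset.disjoint_union_right, Finset.disjoint_left, Finset.disjoint_left]
    refine ⟨fun a ha hX => ?_, fun a ha hY => ?_⟩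
    · obtain ⟨r, hr, h⟩ := Finset.mem_image.1 hX
      exact (sub_ne_of_mem_union_image_add hA ha hr).1 (by rw [← h]; abel)
    · obtain ⟨r, hr, h⟩ := Finset.mem_image.1 hY
      exact (sub_ne_of_mem_union_image_add hA ha hr).2 (by rw [← h]; abel)
  calc 2 * A.card + (runEnds A u).card + (runEnds R c).card
      = (A ∪ (R.image (· + m • u) ∪ R.image (· - (m + 1) • u))).card := by
        rw [Finset.card_union_of_disjoint hdisj, hshift,
          Finset.card_image_of_injective _ sub_left_injective, card_union_image_add_right,
          card_union_image_add_right]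
        ring
    _ ≤ Fintype.card G := Finset.card_le_univ _

theorem mul_card_le_of_forall_sub_ne (hu : (2 * m ^ 2 + 2 * m) • u = 0)
    (hA : ∀ a ∈ A, ∀ b ∈ A, b - a ≠ m • u ∧ b - a ≠ (m + 1) • u) :
    (2 * m + 2) * A.card ≤ m * Fintype.card G := by
  have hends := card_le_mul_card_runEnds (S := A) subset_rfl fun a ha h =>
    (hA a ha _ h).1 (add_sub_cancel_left a _)
  have hwrap : m • (2 * m + 1) • u = -(m • u) := by
    rw [eq_neg_iff_add_eq_zero, ← mul_nsmul, ← add_nsmul, ← hu]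
    ring_nf
  have hruns := card_le_mul_card_runEnds (S := A ∪ A.image (· + u)) (d := (2 * m + 1) • u)
    Finset.subset_union_left fun a ha h =>
      (sub_ne_of_mem_union_image_add hA ha h).1 (by rw [hwrap]; abel)
  have hsum := two_mul_card_add_card_runEnds_le hA
  nlinarith

end DifferenceAvoiding

theorem indepNum_eq_of_forall_card_le {V : Type*} {G : SimpleGraph V} {N : ℕ}
    (hle : ∀ s : Finset V, G.IsIndepSet ↑s → s.card ≤ N) (s : Finset V) (hs : G.IsIndepSet ↑s)
    (hcard : s.card = N) : _root_.indepNum G = N := by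
  have hbdd : N ∈ upperBounds {n | ∃ t : Finset V, (t : Set V) ⊆ Set.univ ∧ t.card = n ∧
      ∀ x ∈ t, ∀ y ∈ t, x ≠ y → ¬G.Adj x y} := by
    rintro n ⟨t, -, rfl, ht⟩
    exact hle t ht
  exact le_antisymm (csSup_le ⟨N, s, subset_univ _, hcard, hs⟩ hbdd)
    (le_csSup ⟨N, hbdd⟩ ⟨s, subset_univ _, hcard, hs⟩)

theorem circG_adj_iff {m : ℕ} {x y : ZMod (2 * m ^ 2 + 2 * m)} :
    (circG m).Adj x y ↔ x ≠ y ∧ ((x - y = m ∨ x - y = m + 1) ∨ (y - x = m ∨ y - x = m + 1)) :=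
  fromRel_adj _ _ _

theorem sub_ne_of_isIndepSet_circG {m : ℕ} (hm : 0 < m) {s : Finset (ZMod (2 * m ^ 2 + 2 * m))}
    (hs : (circG m).IsIndepSet ↑s) :
    ∀ a ∈ s, ∀ b ∈ s, b - a ≠ m • 1 ∧ b - a ≠ (m + 1) • 1 := by
  have hne : ∀ k, 0 < k → k < 2 * m ^ 2 + 2 * m → (k : ZMod (2 * m ^ 2 + 2 * m)) ≠ 0 :=
    fun k hk hkn h => absurd (Nat.le_of_dvd hk ((ZMod.natCast_eq_zero_iff _ _).1 h)) (by omega)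
  intro a ha b hb
  rcases eq_or_ne a b with rfl | hab
  · rw [sub_self, nsmul_one, nsmul_one]
    exact ⟨(hne m hm (by nlinarith)).symm, (hne (m + 1) (by omega) (by nlinarith)).symm⟩
  · have hnadj : ¬(circG m).Adj a b := hs ha hb hab
    rw [circG_adj_iff] at hnadj
    rw [nsmul_one, nsmul_one, Nat.cast_succ]
    tauto

theorem card_le_sq_of_isIndepSet_circG {m : ℕ} (hm : 0 < m)
    {s : Finset (ZMod (2 * m ^ 2 + 2 * m))} (hs : (circG m).IsIndepSet ↑s) : s.card ≤ m ^ 2 := by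
  have : NeZero (2 * m ^ 2 + 2 * m) := ⟨by positivity⟩
  have h := mul_card_le_of_forall_sub_ne (by rw [nsmul_one, ZMod.natCast_self])
    (sub_ne_of_isIndepSet_circG hm hs)
  rw [ZMod.card] at h
  nlinarith

def circGGrid (m : ℕ) : Finset (ZMod (2 * m ^ 2 + 2 * m)) :=
  (Finset.range m ×ˢ Finset.range m).image fun p => ((p.1 * (2 * m + 2) + p.2 : ℕ) : ZMod _)

theorem eq_and_eq_of_natCast_mul_add_eq {m k r k' r' : ℕ} (hk : k < m) (hr : r < m)
    (hk' : k' < m) (hr' : r' < m)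
    (h : ((k * (2 * m + 2) + r : ℕ) : ZMod (2 * m ^ 2 + 2 * m)) = (k' * (2 * m + 2) + r' : ℕ)) :
    k = k' ∧ r = r' := by
  have hlt : ∀ k r, k < m → r < m → k * (2 * m + 2) + r < 2 * m ^ 2 + 2 * m := fun k r hk hr => by
    nlinarith [Nat.mul_le_mul_right (2 * m + 2) (Nat.succ_le_of_lt hk)]
  have hdigits : ∀ k r, r < m →
      (k * (2 * m + 2) + r) / (2 * m + 2) = k ∧ (k * (2 * m + 2) + r) % (2 * m + 2) = r :=
    fun k r hr => by
      rw [add_comm, Nat.add_mul_div_right _ _ (by omega), Nat.div_eq_of_lt (by omega), zero_add,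
        Nat.add_mul_mod_self_right, Nat.mod_eq_of_lt (by omega)]
      exact ⟨rfl, rfl⟩
  rw [ZMod.natCast_eq_natCast_iff', Nat.mod_eq_of_lt (hlt k r hk hr),
    Nat.mod_eq_of_lt (hlt k' r' hk' hr')] at h
  obtain ⟨hq, hrem⟩ := hdigits k r hr
  obtain ⟨hq', hrem'⟩ := hdigits k' r' hr'
  rw [h] at hq hrem
  exact ⟨hq.symm.trans hq', hrem.symm.trans hrem'⟩

theorem card_circGGrid (m : ℕ) : (circGGrid m).card = m ^ 2 := by
  rw [circGGrid, Finset.card_image_of_injOn, Finset.card_product, Finset.card_range, sq]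
  rintro ⟨k, r⟩ hp ⟨k', r'⟩ hq h
  simp only [Finset.coe_product, Finset.coe_range, Set.mem_prod, Set.mem_Iio] at hp hq
  obtain ⟨rfl, rfl⟩ := eq_and_eq_of_natCast_mul_add_eq hp.1 hp.2 hq.1 hq.2 h
  rfl

theorem natCast_sub_natCast_ne_of_lt {m r r' : ℕ} (hr : r < m) (hr' : r' < m) :
    (r : ZMod (2 * m + 2)) - r' ≠ m ∧ (r : ZMod (2 * m + 2)) - r' ≠ m + 1 := by
  have hne : ∀ t : ℕ, m ≤ t → t < m + 2 → (r : ZMod (2 * m + 2)) - r' ≠ t := by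
    intro t ht ht' h
    have h' : (r : ZMod (2 * m + 2)) = (t + r' : ℕ) := by push_cast; linear_combination h
    rw [ZMod.natCast_eq_natCast_iff', Nat.mod_eq_of_lt (by omega),
      Nat.mod_eq_of_lt (by omega)] at h'
    omega
  exact ⟨hne m le_rfl (by omega), by exact_mod_cast hne (m + 1) (by omega) (by omega)⟩

theorem isIndepSet_circGGrid (m : ℕ) : (circG m).IsIndepSet ↑(circGGrid m) := by
  let ψ := ZMod.castHom (⟨m, by ring⟩ : 2 * m + 2 ∣ 2 * m ^ 2 + 2 * m) (ZMod (2 * m + 2))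
  have hψ : ∀ k r : ℕ, ψ ((k * (2 * m + 2) + r : ℕ) : ZMod (2 * m ^ 2 + 2 * m)) = r := by
    intro k r
    rw [map_natCast, Nat.cast_add, Nat.cast_mul, ZMod.natCast_self, mul_zero, zero_add]
  have hgrid : ∀ x ∈ circGGrid m, ∀ y ∈ circGGrid m, x - y ≠ m ∧ x - y ≠ m + 1 := by
    intro x hx y hy
    obtain ⟨⟨k, r⟩, hp, rfl⟩ := Finset.mem_image.1 hx
    obtain ⟨⟨k', r'⟩, hq, rfl⟩ := Finset.mem_image.1 hy
    simp only [Finset.mem_product, Finset.mem_range] at hp hq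
    have hne := natCast_sub_natCast_ne_of_lt hp.2 hq.2
    constructor <;> intro h <;> [apply hne.1; apply hne.2] <;>
      simpa only [map_sub, hψ, map_natCast, map_add, map_one] using congrArg ψ h
  intro x hx y hy hxy hadj
  rw [circG_adj_iff] at hadj
  have hxy' := hgrid x hx y hy
  have hyx' := hgrid y hy x hx
  tauto

theorem circG_indepNum (m : ℕ) (hm : 3 ≤ m) : _root_.indepNum (circG m) = m ^ 2 :=
  indepNum_eq_of_forall_card_le (fun _ hs => card_le_sq_of_isIndepSet_circG (by omega) hs)
    (circGGrid m) (isIndepSet_circGGrid m) (card_circGGrid m)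
end

section
/- For m ≥ 3, the circulant graph G_m on ℤ/(2m²+2m)ℤ with connection set {±m, ±(m+1)} is (3,0)-stable: for any three vertices u,v,w, α(G_m \ {u,v,w}) = α(G_m) = m². -/
/-!
Write `N = 2m² + 2m = m(2m + 1) + m`. The `m` blocks `(2m + 1)j + [0, m)`, `j < m`, form an
independent set of size `m²`.

An independent set `s` has no two vertices at distance `m` or `m + 1`, so it meets each
window `c + [0, 2m]` in at most `m` vertices: `c + k ↦ c + k + m` for `k ≤ m` and
`c + k ↦ c + k - m - 1` for `k > m` is injective on the window and maps `s` outside `s`.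
If `s` misses `m` consecutive vertices, the other `m(2m + 1)` split into `m` windows, so
`|s| ≤ m²`. Otherwise every `m` consecutive vertices contain a `c ∉ s` with `c + 1 ∈ s`, so
there are at least `N / m` such `c`, while `x ↦ x + m` maps `s` injectively to the `c` with
`c, c + 1 ∉ s`; counting gives `|s| < m²`.

The blocks leave a gap of `2m + 1` consecutive vertices. Sliding them so that a vertex `u` runs
through this gap, each of two further vertices is covered at most `m` times, so some translate
of the blocks avoids all three.
-/

open SimpleGraph Set

open Finset Pointwise

theorem indepNumOn_eq_of_forall_le_of_exists {V : Type*} {G : SimpleGraph V} {A : Set V} {k : ℕ}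
    (hle : ∀ s : Finset V, ↑s ⊆ A → G.IsIndepSet ↑s → #s ≤ k)
    (hex : ∃ s : Finset V, ↑s ⊆ A ∧ G.IsIndepSet ↑s ∧ #s = k) :
    indepNumOn G A = k := by
  refine IsGreatest.csSup_eq ⟨?_, ?_⟩
  · obtain ⟨s, hsA, hs, rfl⟩ := hex
    exact ⟨s, hsA, rfl, hs⟩
  · rintro _ ⟨s, hsA, rfl, hs⟩
    exact hle s hsA hs

section Jumps

variable {n m : ℕ} {s : Finset (ZMod n)}

def AvoidsJumps (m : ℕ) (s : Finset (ZMod n)) : Prop :=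
  ∀ x ∈ s, x + m ∉ s ∧ x + (m + 1) ∉ s

theorem AvoidsJumps.vadd (hs : AvoidsJumps m s) (t : ZMod n) : AvoidsJumps m (t +ᵥ s) := by
  intro x hx
  rw [← neg_vadd_mem_iff, vadd_eq_add] at hx ⊢
  rw [← neg_vadd_mem_iff, vadd_eq_add]
  simpa only [neg_add_eq_sub, add_sub_right_comm] using hs _ hx

theorem AvoidsJumps.card_window_le (hs : AvoidsJumps m s) (c : ZMod n) :
    #((Finset.range (2 * m + 1)).filter fun k : ℕ => c + k ∈ s) ≤ m := by
  set A := (Finset.range (2 * m + 1)).filter fun k : ℕ => c + k ∈ s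
  let ψ : ℕ → ℕ := fun k => if k ≤ m then k + m else k - (m + 1)
  have hmaps : Set.MapsTo ψ A ↑(Finset.range (2 * m + 1) \ A) := by
    intro k hk
    simp only [A, coe_filter, Finset.mem_range, Set.mem_ofPred_eq] at hk
    simp only [A, coe_sdiff, coe_filter, Finset.coe_range, Set.mem_sdiff, Set.mem_Iio,
      Set.mem_ofPred_eq, not_and, ψ]
    split_ifs with hkm
    · refine ⟨by omega, fun _ h => (hs _ hk.2).1 ?_⟩
      simpa only [Nat.cast_add, add_assoc] using h
    · refine ⟨by omega, fun _ h => (hs _ h).2 ?_⟩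
      have : k - (m + 1) + (m + 1) = k := by omega
      rw [add_assoc, ← Nat.cast_succ, ← Nat.cast_add, this]
      exact hk.2
  have hinj : Set.InjOn ψ A := by
    intro k hk l hl h
    simp only [A, coe_filter, Finset.mem_range, Set.mem_ofPred_eq] at hk hl
    simp only [ψ] at h
    split_ifs at h <;> omega
  have := card_le_card_of_injOn ψ hmaps hinj
  have hA : A ⊆ Finset.range (2 * m + 1) := filter_subset _ _
  rw [card_sdiff_of_subset hA, card_range] at this
  omega

theorem AvoidsJumps.card_le_of_empty_window [NeZero n] {r : ℕ} (hn : n = (2 * m + 1) * r + m)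
    (hs : AvoidsJumps m s) {c : ZMod n} (hc : ∀ k < m, c + k ∉ s) : #s ≤ m * r := by
  set W : ℕ → Finset (ZMod n) := fun j =>
    ((Finset.range (2 * m + 1)).filter fun k : ℕ => c + ↑(m + (2 * m + 1) * j) + k ∈ s).image
      fun k : ℕ => c + ↑(m + (2 * m + 1) * j) + k
  have hcover : s ⊆ (Finset.range r).biUnion W := by
    intro x hx
    set v := (x - (c + m)).val
    have hvn : v < n := ZMod.val_lt _
    have hxv : x = c + m + v := by rw [ZMod.natCast_zmod_val]; ring
    have hv : v < (2 * m + 1) * r := by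
      by_contra! hv
      have hwrap : m + v = n + (v - (2 * m + 1) * r) := by omega
      have : x = c + ↑(v - (2 * m + 1) * r) := by
        rw [hxv, add_assoc, ← Nat.cast_add, hwrap, Nat.cast_add, ZMod.natCast_self, zero_add]
      exact hc _ (by omega) (this ▸ hx)
    have hdiv := Nat.div_add_mod v (2 * m + 1)
    have hx' : x = c + ↑(m + (2 * m + 1) * (v / (2 * m + 1))) + ↑(v % (2 * m + 1)) := by
      rw [hxv, add_assoc c, ← Nat.cast_add, add_assoc, ← Nat.cast_add, add_assoc, hdiv]
    refine mem_biUnion.2 ⟨v / (2 * m + 1), ?_, mem_image.2 ⟨v % (2 * m + 1), ?_, hx'.symm⟩⟩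
    · rw [Finset.mem_range, Nat.div_lt_iff_lt_mul (by omega), mul_comm]
      exact hv
    · exact mem_filter.2 ⟨Finset.mem_range.2 (Nat.mod_lt _ (by omega)), hx' ▸ hx⟩
  calc #s ≤ ∑ j ∈ Finset.range r, #(W j) := (Finset.card_le_card hcover).trans card_biUnion_le
    _ ≤ ∑ j ∈ Finset.range r, m :=
      sum_le_sum fun j _ => card_image_le.trans (hs.card_window_le _)
    _ = m * r := by simp [mul_comm]

theorem le_mul_card_of_forall_exists_add_mem [NeZero n] {A : Finset (ZMod n)}
    (h : ∀ c : ZMod n, ∃ k < m, c + k ∈ A) : n ≤ m * #A :=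
  calc n = #(univ : Finset (ZMod n)) := by rw [card_univ, ZMod.card]
    _ ≤ #((Finset.range m).biUnion fun k => A.image (· - (k : ZMod n))) :=
      Finset.card_le_card fun c _ => by
        obtain ⟨k, hk, hc⟩ := h c
        exact mem_biUnion.2
          ⟨k, Finset.mem_range.2 hk, mem_image.2 ⟨_, hc, add_sub_cancel_right c _⟩⟩
    _ ≤ ∑ k ∈ Finset.range m, #(A.image (· - (k : ZMod n))) := card_biUnion_le
    _ ≤ ∑ k ∈ Finset.range m, #A := sum_le_sum fun _ _ => card_image_le
    _ = m * #A := by simp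

theorem exists_lt_notMem_add_mem_of_notMem (hcov : ∀ c : ZMod n, ∃ k < m, c + k ∈ s)
    {c : ZMod n} (hc : c ∉ s) : ∃ k, k + 1 < m ∧ c + k ∉ s ∧ c + k + 1 ∈ s := by
  have hex := hcov c
  obtain ⟨hlt, hmem⟩ := Nat.find_spec hex
  have hpos : Nat.find hex ≠ 0 := by
    intro h
    rw [h, Nat.cast_zero, add_zero] at hmem
    exact hc hmem
  refine ⟨Nat.find hex - 1, by omega,
    fun h => Nat.find_min hex (by omega : Nat.find hex - 1 < _) ⟨by omega, h⟩, ?_⟩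
  have : Nat.find hex - 1 + 1 = Nat.find hex := by omega
  rwa [add_assoc, ← Nat.cast_add_one, this]

theorem AvoidsJumps.exists_lt_notMem_add_mem (hs : AvoidsJumps m s)
    (hcov : ∀ c : ZMod n, ∃ k < m, c + k ∈ s) (c : ZMod n) :
    ∃ k < m, c + k ∉ s ∧ c + k + 1 ∈ s := by
  by_cases hc : c ∈ s
  swap
  · obtain ⟨k, hk, h⟩ := exists_lt_notMem_add_mem_of_notMem hcov hc
    exact ⟨k, by omega, h⟩
  have hex : ∃ i : ℕ, c + i ∉ s := ⟨m, (hs c hc).1⟩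
  set i := Nat.find hex
  have hrun : ∀ l < i, c + l ∈ s := fun l hl => not_not.1 (Nat.find_min hex hl)
  have hi : i ≤ m := Nat.find_min' hex (hs c hc).1
  obtain ⟨k, hk, hgap, hend⟩ := exists_lt_notMem_add_mem_of_notMem hcov (Nat.find_spec hex)
  by_cases hik : i + k < m
  · exact ⟨i + k, hik, by rwa [Nat.cast_add, ← add_assoc],
      by rwa [Nat.cast_add, ← add_assoc]⟩
  · have hl : i + k + 1 - m + m = i + k + 1 := by omega
    refine absurd ?_ (hs _ (hrun (i + k + 1 - m) (by omega))).1
    rw [add_assoc, ← Nat.cast_add, hl]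
    push_cast
    rwa [← add_assoc, ← add_assoc]

theorem AvoidsJumps.two_mul_mul_card_add_le [NeZero n] (hs : AvoidsJumps m s)
    (hcov : ∀ c : ZMod n, ∃ k < m, c + k ∈ s) : 2 * m * #s + n ≤ m * n := by
  set U := sᶜ.filter fun c => c + 1 ∉ s
  set V := sᶜ.filter fun c => c + 1 ∈ s
  have hU : #s ≤ #U := by
    refine card_le_card_of_injOn (· + (m : ZMod n)) (fun x hx => ?_) (add_left_injective _).injOn
    simp only [U, coe_filter, Set.mem_ofPred_eq]
    refine ⟨mem_compl.2 (hs x hx).1, ?_⟩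
    rw [add_assoc]
    exact (hs x hx).2
  have hpart : #s + #U + #V = n := by
    have : #V + #U = #sᶜ := card_filter_add_card_filter_not _
    rw [card_compl, ZMod.card] at this
    have := card_le_univ s
    rw [ZMod.card] at this
    omega
  have hV : n ≤ m * #V := le_mul_card_of_forall_exists_add_mem fun c => by
    obtain ⟨k, hk, h⟩ := hs.exists_lt_notMem_add_mem hcov c
    exact ⟨k, hk, by simpa [V] using h⟩
  calc 2 * m * #s + n ≤ 2 * m * #s + m * #V := by omega
    _ = m * (2 * #s + #V) := by ring
    _ ≤ m * n := Nat.mul_le_mul_left _ (by omega)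

theorem exists_vadd_notMem {L b : ℕ} {S : Finset (ZMod n)} {c : ZMod n}
    (hc : ∀ k < L, c + k ∉ S)
    (hb : ∀ d : ZMod n, #((Finset.range L).filter fun k : ℕ => d + k ∈ S) ≤ b)
    (hbL : 2 * b < L) (u v w : ZMod n) :
    ∃ t : ZMod n, u ∉ t +ᵥ S ∧ v ∉ t +ᵥ S ∧ w ∉ t +ᵥ S := by
  have hcard : #(((Finset.range L).filter fun k : ℕ => v - u + c + k ∈ S) ∪
      (Finset.range L).filter fun k : ℕ => w - u + c + k ∈ S) < #(Finset.range L) :=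
    calc _ ≤ b + b := (Finset.card_union_le _ _).trans (add_le_add (hb _) (hb _))
      _ < #(Finset.range L) := by rw [card_range]; omega
  obtain ⟨k, hk, hbad⟩ := exists_mem_notMem_of_card_lt_card hcard
  simp only [Finset.mem_union, mem_filter, not_or, not_and] at hbad
  have hk : k < L := Finset.mem_range.1 hk
  refine ⟨u - (c + k), ?_, ?_, ?_⟩ <;> rw [← neg_vadd_mem_iff, vadd_eq_add]
  · simpa using hc k hk
  · convert hbad.1 (Finset.mem_range.2 hk) using 2; ring
  · convert hbad.2 (Finset.mem_range.2 hk) using 2; ring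

end Jumps

instance (m : ℕ) [NeZero m] : NeZero (2 * m ^ 2 + 2 * m) := ⟨by have := NeZero.ne m; omega⟩

section Blocks

variable {m : ℕ}

theorem AvoidsJumps.card_le_sq [NeZero m] {s : Finset (ZMod (2 * m ^ 2 + 2 * m))}
    (hs : AvoidsJumps m s) : #s ≤ m ^ 2 := by
  by_cases hcov : ∀ c : ZMod (2 * m ^ 2 + 2 * m), ∃ k < m, c + k ∈ s
  · have hm : 0 < m := Nat.pos_of_ne_zero (NeZero.ne m)
    have := hs.two_mul_mul_card_add_le hcov
    nlinarith
  · push Not at hcov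
    obtain ⟨c, hc⟩ := hcov
    simpa [sq] using hs.card_le_of_empty_window (r := m) (by ring) hc

def blockSet (m : ℕ) : Finset (ZMod (2 * m ^ 2 + 2 * m)) :=
  (Finset.range m ×ˢ Finset.range m).image fun p => (((2 * m + 1) * p.1 + p.2 : ℕ) : ZMod _)

theorem mul_add_add_lt_mul {j i : ℕ} (hj : j < m) (hi : i < m) :
    (2 * m + 1) * j + i + (m + 1) < (2 * m + 1) * m := by
  have := Nat.mul_le_mul_left (2 * m + 1) (Nat.succ_le_of_lt hj)
  rw [Nat.mul_succ] at this
  omega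

theorem lt_and_mod_lt_of_natCast_mem_blockSet {v : ℕ} (hv : v < 2 * m ^ 2 + 2 * m)
    (h : (v : ZMod (2 * m ^ 2 + 2 * m)) ∈ blockSet m) :
    v % (2 * m + 1) < m ∧ v < (2 * m + 1) * m := by
  obtain ⟨⟨j, i⟩, hji, he⟩ := mem_image.1 h
  simp only [mem_product, Finset.mem_range] at hji he
  have hlt := mul_add_add_lt_mul hji.1 hji.2
  have hN : 2 * m ^ 2 + 2 * m = (2 * m + 1) * m + m := by ring
  have := congrArg ZMod.val he
  rw [ZMod.val_cast_of_lt (by omega), ZMod.val_cast_of_lt hv] at this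
  subst this
  rw [Nat.mul_add_mod, Nat.mod_eq_of_lt (by omega)]
  omega

theorem natCast_notMem_blockSet {j k : ℕ} (hk : m ≤ k) (hk' : k < 2 * m + 1)
    (hjk : (2 * m + 1) * j + k < 2 * m ^ 2 + 2 * m) :
    (((2 * m + 1) * j + k : ℕ) : ZMod (2 * m ^ 2 + 2 * m)) ∉ blockSet m := fun h => by
  have := (lt_and_mod_lt_of_natCast_mem_blockSet hjk h).1
  rw [Nat.mul_add_mod, Nat.mod_eq_of_lt hk'] at this
  omega

theorem card_blockSet : #(blockSet m) = m ^ 2 := by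
  rw [blockSet, card_image_of_injOn, card_product, card_range, sq]
  rintro ⟨j, i⟩ hji ⟨j', i'⟩ hji' he
  simp only [coe_product, Finset.coe_range, Set.mem_prod, Set.mem_Iio] at hji hji'
  have h1 := mul_add_add_lt_mul hji.1 hji.2
  have h2 := mul_add_add_lt_mul hji'.1 hji'.2
  have hN : 2 * m ^ 2 + 2 * m = (2 * m + 1) * m + m := by ring
  have := congrArg ZMod.val he
  simp only at this
  rw [ZMod.val_cast_of_lt (by omega), ZMod.val_cast_of_lt (by omega)] at this
  have hdiv := congrArg (· / (2 * m + 1)) this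
  have hmod := congrArg (· % (2 * m + 1)) this
  simp only [Nat.mul_add_div (by omega : 0 < 2 * m + 1), Nat.mul_add_mod,
    Nat.div_eq_of_lt (by omega : i < 2 * m + 1), Nat.div_eq_of_lt (by omega : i' < 2 * m + 1),
    Nat.mod_eq_of_lt (by omega : i < 2 * m + 1), Nat.mod_eq_of_lt (by omega : i' < 2 * m + 1)]
    at hdiv hmod
  exact Prod.ext (by simpa using hdiv) hmod

theorem avoidsJumps_blockSet : AvoidsJumps m (blockSet m) := by
  intro x hx
  obtain ⟨⟨j, i⟩, hji, rfl⟩ := mem_image.1 hx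
  simp only [mem_product, Finset.mem_range] at hji ⊢
  have hlt := mul_add_add_lt_mul hji.1 hji.2
  have hN : 2 * m ^ 2 + 2 * m = (2 * m + 1) * m + m := by ring
  constructor
  · have := natCast_notMem_blockSet (m := m) (j := j) (k := i + m) (by omega) (by omega) (by omega)
    rwa [← add_assoc, Nat.cast_add _ m] at this
  · have := natCast_notMem_blockSet (m := m) (j := j) (k := i + (m + 1))
      (by omega) (by omega) (by omega)
    rwa [← add_assoc, Nat.cast_add _ (m + 1), Nat.cast_succ] at this

-- the `2m+1` vertices between the last block and the first one
theorem natCast_add_notMem_blockSet [NeZero m] {k : ℕ} (hk : k < 2 * m + 1) :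
    (((2 * m + 1) * m - (m + 1) : ℕ) : ZMod (2 * m ^ 2 + 2 * m)) + k ∉ blockSet m := by
  have hm : 0 < m := Nat.pos_of_ne_zero (NeZero.ne m)
  have hN : 2 * m ^ 2 + 2 * m = (2 * m + 1) * m + m := by ring
  have hq : (2 * m + 1) * (m - 1) = (2 * m + 1) * m - (2 * m + 1) := Nat.mul_sub_one _ _
  have hq' : 2 * m + 1 ≤ (2 * m + 1) * m := Nat.le_mul_of_pos_right _ hm
  rw [← Nat.cast_add]
  by_cases hkm : k ≤ m
  · have := natCast_notMem_blockSet (m := m) (j := m - 1) (k := m + k)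
      (by omega) (by omega) (by omega)
    rwa [show (2 * m + 1) * (m - 1) + (m + k) = (2 * m + 1) * m - (m + 1) + k by omega] at this
  · exact fun h => by have := (lt_and_mod_lt_of_natCast_mem_blockSet (by omega) h).2; omega

theorem isIndepSet_circG_iff [NeZero m] {s : Finset (ZMod (2 * m ^ 2 + 2 * m))} :
    (circG m).IsIndepSet ↑s ↔ AvoidsJumps m s := by
  have hN : 2 * m ^ 2 + 2 * m = (2 * m + 1) * m + m := by ring
  have hm : 0 < m := Nat.pos_of_ne_zero (NeZero.ne m)
  have hpos : 2 * m + 1 ≤ (2 * m + 1) * m := Nat.le_mul_of_pos_right _ hm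
  have hne : ∀ k, 0 < k → k < 2 * m ^ 2 + 2 * m → (k : ZMod (2 * m ^ 2 + 2 * m)) ≠ 0 :=
    fun k hk0 hk h => by
      have := ZMod.val_cast_of_lt hk
      rw [h, ZMod.val_zero] at this
      omega
  have hm0 : (m : ZMod (2 * m ^ 2 + 2 * m)) ≠ 0 := hne m (by omega) (by omega)
  have hm1 : (m : ZMod (2 * m ^ 2 + 2 * m)) + 1 ≠ 0 := by
    simpa using hne (m + 1) (by omega) (by omega)
  constructor
  · intro hs x hx
    refine ⟨fun h => hs h hx (by simpa using hm0) ?_, fun h => hs h hx (by simpa using hm1) ?_⟩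
    · exact (fromRel_adj _ _ _).2
        ⟨by simpa using hm0, Or.inl (Or.inl (add_sub_cancel_left _ _))⟩
    · exact (fromRel_adj _ _ _).2
        ⟨by simpa using hm1, Or.inl (Or.inr (add_sub_cancel_left _ _))⟩
  · intro hs x hx y hy hxy hadj
    rw [circG, fromRel_adj] at hadj
    rcases hadj.2 with (h | h) | (h | h)
    · exact (hs y hy).1 (sub_eq_iff_eq_add'.1 h ▸ hx)
    · exact (hs y hy).2 (sub_eq_iff_eq_add'.1 h ▸ hx)
    · exact (hs x hx).1 (sub_eq_iff_eq_add'.1 h ▸ hy)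
    · exact (hs x hx).2 (sub_eq_iff_eq_add'.1 h ▸ hy)

theorem indepNumOn_circG_eq [NeZero m] {A : Set (ZMod (2 * m ^ 2 + 2 * m))}
    {t : ZMod (2 * m ^ 2 + 2 * m)} (ht : ((t +ᵥ blockSet m : Finset _) : Set _) ⊆ A) :
    indepNumOn (circG m) A = m ^ 2 :=
  indepNumOn_eq_of_forall_le_of_exists (fun _ _ hs => (isIndepSet_circG_iff.1 hs).card_le_sq)
    ⟨_, ht, isIndepSet_circG_iff.2 (avoidsJumps_blockSet.vadd t), by
      rw [card_vadd_finset, card_blockSet]⟩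

end Blocks

theorem circG_stable_three_zero (m : ℕ) (hm : 3 ≤ m) :
    _root_.indepNum (circG m) = m ^ 2 ∧
      ∀ u v w : ZMod (2 * m ^ 2 + 2 * m), u ≠ v → u ≠ w → v ≠ w →
        indepNumOn (circG m) ({u, v, w} : Set (ZMod (2 * m ^ 2 + 2 * m)))ᶜ = m ^ 2 := by
  have : NeZero m := ⟨by omega⟩
  refine ⟨indepNumOn_circG_eq (t := 0) (Set.subset_univ _), fun u v w _ _ _ => ?_⟩
  obtain ⟨t, hu, hv, hw⟩ := exists_vadd_notMem
    (fun k hk => natCast_add_notMem_blockSet (m := m) hk) avoidsJumps_blockSet.card_window_le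
    (by omega) u v w
  refine indepNumOn_circG_eq (t := t) fun x hx => ?_
  rintro (rfl | rfl | rfl) <;> contradiction
end

section
/- For every ℓ ≥ 0 there exists a sequence of (ℓ+3, ℓ)-stable graphs G_m with |V(G_m)| → ∞ and α(G_m) = |V(G_m)|/2 − O(√|V(G_m)|). -/
open SimpleGraph Set

/-!
The graphs are the circulant graphs on `ℤ/n`, `n = 2M(M+1)`, with jumps `M` and `M + 1`; their
independence number is `M² = n/2 - M`.

Upper bound: an independent set meets any `2M + 1` consecutive residues in at most `M` points,
because `i ↦ i + M (mod 2M + 1)` sends its points there to non-points injectively. If every window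
of `2M + 2` consecutive residues also holds at most `M` points, averaging gives at most `M²`.
Otherwise a window holds `M + 1` points, one from each pair `{i, i + M + 1}`, which forces `M`
consecutive non-points; the other `n - M = M(2M + 1)` residues split into `M` windows of length
`2M + 1`.

Lower bound and stability: `M` blocks of `M` consecutive residues, separated by gaps of `M + 1` and
one gap of `2M + 1`, form an independent set, and every three vertices are missed by one of its
translates. Deleting `l + 3` vertices, three of which such a maximum independent set misses, costs
at most `l`.
-/

section IndepNum

variable {V : Type*} {G : SimpleGraph V}

lemma indepNumOn_le {A : Set V} {k : ℕ}
    (h : ∀ s : Finset V, ↑s ⊆ A → G.IsIndepSet ↑s → s.card ≤ k) :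
    indepNumOn G A ≤ k := by
  refine csSup_le ⟨0, ∅, by simp⟩ ?_
  rintro _ ⟨s, hsA, rfl, hs⟩
  exact h s hsA fun x hx y hy => hs x hx y hy

lemma card_le_indepNumOn [Fintype V] {A : Set V} {s : Finset V} (hsA : ↑s ⊆ A)
    (hs : G.IsIndepSet ↑s) : s.card ≤ indepNumOn G A := by
  refine le_csSup ⟨Fintype.card V, ?_⟩ ⟨s, hsA, rfl, fun x hx y hy => hs hx hy⟩
  rintro _ ⟨t, -, rfl, -⟩
  exact t.card_le_univ

theorem isStable_of_forall_exists_disjoint [Fintype V] {j : ℕ}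
    (h : ∀ T : Finset V, T.card = j →
      ∃ s : Finset V, G.IsIndepSet ↑s ∧ s.card = _root_.indepNum G ∧ Disjoint s T)
    (l : ℕ) :
    IsStable G (l + j) l := by
  classical
  intro S hS
  obtain ⟨T, hTS, hT⟩ := Finset.exists_subset_card_eq (show j ≤ S.card by omega)
  obtain ⟨s, hs, hcard, hdisj⟩ := h T hT
  have hinter : (s ∩ S).card ≤ l := calc
    (s ∩ S).card ≤ (S \ T).card := Finset.card_le_card fun x hx =>
      Finset.mem_sdiff.2 ⟨(Finset.mem_inter.1 hx).2,
        Finset.disjoint_left.1 hdisj (Finset.mem_inter.1 hx).1⟩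
    _ = l := by rw [Finset.card_sdiff_of_subset hTS]; omega
  have hout : (s \ S).card ≤ indepNumOn G (↑S)ᶜ :=
    card_le_indepNumOn (by simp [Set.subset_def]) (hs.mono (by simp))
  have := Finset.card_sdiff_add_card_inter s S
  omega

end IndepNum

section Counting

open Function
open Nat (count count_add count_eq_card_filter_range)

variable {P : ℕ → Prop}

def AvoidsDiffs (M : ℕ) (P : ℕ → Prop) : Prop :=
  ∀ i, P i → ¬P (i + M) ∧ ¬P (i + (M + 1))

lemma AvoidsDiffs.shift {M : ℕ} (h : AvoidsDiffs M P) (t : ℕ) :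
    AvoidsDiffs M (fun i => P (t + i)) := by
  intro i hi
  simpa only [add_assoc] using h (t + i) hi

variable [DecidablePred P]

lemma Function.Periodic.count_shift {n : ℕ} (hP : Periodic P n) (t : ℕ) :
    count (fun i => P (t + i)) n = count P n := by
  have h := (count_add (p := P) t n).symm.trans (Nat.count_add' (p := P) t n)
  simp only [show ∀ k, P (k + n) ↔ P k from fun k => by rw [hP k]] at h
  exact Nat.add_left_cancel h

lemma Function.Periodic.sum_count_shift {n : ℕ} (hP : Periodic P n) (L : ℕ) :
    ∑ t ∈ Finset.range n, count (fun i => P (t + i)) L = L * count P n := by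
  induction L with
  | zero => simp
  | succ L ih =>
    simp only [Nat.count_succ, Finset.sum_add_distrib, ih, Finset.sum_boole, Nat.cast_id]
    rw [← count_eq_card_filter_range]
    simp only [add_comm _ L, hP.count_shift]
    ring

lemma Nat.count_mod_mul (p : ℕ → Prop) [DecidablePred p] (m k : ℕ) :
    count (fun i => p (i % m)) (m * k) = count (fun i => p (i % m)) m * k := by
  induction k with
  | zero => simp
  | succ k ih => simp only [Nat.mul_succ, count_add, Nat.mul_add_mod, ih]

lemma Nat.count_lt_mod_two_mul_add_one (M : ℕ) :
    count (fun i => M < i % (2 * M + 1)) (2 * M + 1) = M := by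
  rw [show 2 * M + 1 = (M + 1) + M by ring, count_add,
    Nat.count_of_forall_not fun i hi => by rw [Nat.mod_eq_of_lt (by omega)]; omega,
    Nat.count_of_forall fun i hi => by rw [Nat.mod_eq_of_lt (by omega)]; omega, zero_add]

namespace AvoidsDiffs

variable {M : ℕ}

lemma count_two_mul_add_one_le (h : AvoidsDiffs M P) : count P (2 * M + 1) ≤ M := by
  rw [count_eq_card_filter_range]
  set E := (Finset.range (2 * M + 1)).filter P
  -- `i ↦ i + M (mod 2M + 1)` maps the points into the non-points of the window
  let σ : ℕ → ℕ := fun i => if i ≤ M then i + M else i - (M + 1)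
  have hσ : ∀ i ∈ E, σ i ∈ Finset.range (2 * M + 1) \ E := by
    intro i hi
    obtain ⟨hi, hPi⟩ := Finset.mem_filter.1 hi
    rw [Finset.mem_range] at hi
    rw [Finset.mem_sdiff, Finset.mem_range, Finset.mem_filter, Finset.mem_range, not_and]
    by_cases hiM : i ≤ M
    · simp only [σ, if_pos hiM]
      exact ⟨by omega, fun _ => (h i hPi).1⟩
    · simp only [σ, if_neg hiM]
      refine ⟨by omega, fun _ hP => (h _ hP).2 ?_⟩
      rwa [Nat.sub_add_cancel (by omega)]
  have hinj : Set.InjOn σ E := by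
    intro i hi j hj hij
    have hi := Finset.mem_range.1 (Finset.mem_filter.1 hi).1
    have hj := Finset.mem_range.1 (Finset.mem_filter.1 hj).1
    simp only [σ] at hij
    split_ifs at hij <;> omega
  have := Finset.card_le_card_of_injOn σ (fun i hi => hσ i hi) hinj
  rw [Finset.card_sdiff_of_subset (show E ⊆ _ from Finset.filter_subset _ _),
    Finset.card_range] at this
  omega

lemma count_mul_le (h : AvoidsDiffs M P) (k : ℕ) : count P ((2 * M + 1) * k) ≤ M * k := by
  induction k with
  | zero => simp
  | succ k ih =>
    rw [Nat.mul_succ, count_add, Nat.mul_succ]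
    exact Nat.add_le_add ih (h.shift _).count_two_mul_add_one_le

lemma exists_gap (h : AvoidsDiffs M P) (hdense : M + 1 ≤ count P (2 * M + 2)) :
    ∃ g, ∀ j < M, ¬P (g + j) := by
  -- each pair `{i, i + M + 1}` with `i ≤ M` holds at most one point, so here exactly one
  have hpair : ∀ i ≤ M, P i ∨ P (i + (M + 1)) := by
    have hcount : count P (2 * M + 2) = count (fun i => P i ∨ P (i + (M + 1))) (M + 1) := by
      rw [show 2 * M + 2 = (M + 1) + (M + 1) by ring, count_add, count_eq_card_filter_range,
        count_eq_card_filter_range, count_eq_card_filter_range, Finset.filter_or,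
        Finset.card_union_of_disjoint (Finset.disjoint_filter.2 fun i _ hi => (h i hi).2)]
      simp only [add_comm (M + 1)]
    have := Nat.count_iff_forall.1 (le_antisymm (Nat.count_le _) (hcount ▸ hdense))
    exact fun i hi => this i (by omega)
  have hsome : ∃ i, ¬P i := by
    by_cases h0 : P 0
    · exact ⟨M, by simpa using (h 0 h0).1⟩
    · exact ⟨0, h0⟩
  -- the gap starts at the first non-point `g`: the pairs push it up to `M`, and beyond `M` the
  -- points below `g` exclude their partners
  refine ⟨Nat.find hsome, fun j hj => ?_⟩
  set g := Nat.find hsome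
  have hup : ∀ j, g + j ≤ M → ¬P (g + j) := by
    intro j
    induction j with
    | zero => exact fun _ => Nat.find_spec hsome
    | succ j ih =>
      intro hj hP
      rcases hpair (g + j) (by omega) with h1 | h1
      · exact ih (by omega) h1
      · exact (h _ hP).1 (by rwa [show g + (j + 1) + M = g + j + (M + 1) by ring])
  by_cases hgj : g + j ≤ M
  · exact hup j hgj
  · have := (h (g + j - (M + 1)) (not_not.1 (Nat.find_min hsome (by omega)))).2
    rwa [Nat.sub_add_cancel (by omega)] at this

lemma count_le_of_gap (h : AvoidsDiffs M P) (hP : Periodic P (2 * M * (M + 1))) {g : ℕ}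
    (hg : ∀ j < M, ¬P (g + j)) : count P (2 * M * (M + 1)) ≤ M * M := by
  rw [← hP.count_shift g, show 2 * M * (M + 1) = M + (2 * M + 1) * M by ring, count_add,
    Nat.count_of_forall_not hg, zero_add]
  simpa only [add_assoc] using (h.shift (g + M)).count_mul_le M

theorem count_le_of_periodic (h : AvoidsDiffs M P) (hP : Periodic P (2 * M * (M + 1))) :
    count P (2 * M * (M + 1)) ≤ M * M := by
  by_contra! hlt
  obtain ⟨t, -, ht⟩ :
      ∃ t ∈ Finset.range (2 * M * (M + 1)), M < count (fun i => P (t + i)) (2 * M + 2) := by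
    apply Finset.exists_lt_of_sum_lt
    rw [hP.sum_count_shift, Finset.sum_const, Finset.card_range, smul_eq_mul]
    nlinarith
  obtain ⟨g, hg⟩ := (h.shift t).exists_gap ht
  exact hlt.not_ge (h.count_le_of_gap hP (g := t + g) (by simpa only [add_assoc] using hg))

end AvoidsDiffs

end Counting

namespace SimpleGraph

variable {G : Type*} [AddGroup G] {s : Set G}

lemma isIndepSet_circulantGraph_iff (hs : 0 ∉ s) {A : Set G} :
    (circulantGraph s).IsIndepSet A ↔ ∀ x ∈ A, ∀ d ∈ s, d + x ∉ A := by
  constructor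
  · intro hA x hx d hd hdx
    have hd0 : d ≠ 0 := fun h0 => hs (h0 ▸ hd)
    exact hA hdx hx (by simpa using hd0) ⟨by simpa using hd0, Or.inl (by simpa using hd)⟩
  · rintro h x hx y hy - ⟨-, hd | hd⟩
    · exact h y hy _ hd (by simpa using hx)
    · exact h x hx _ hd (by simpa using hy)

lemma IsIndepSet.image_add_right_circulantGraph {A : Set G}
    (hA : (circulantGraph s).IsIndepSet A) (u : G) :
    (circulantGraph s).IsIndepSet ((· + u) '' A) := by
  rintro _ ⟨x, hx, rfl⟩ _ ⟨y, hy, rfl⟩ hne hadj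
  exact hA hx hy (fun h => hne (h ▸ rfl)) (circulantGraph_adj_translate.1 hadj)

end SimpleGraph

lemma Fin.card_filter_val_eq_count {n : ℕ} (p : ℕ → Prop) [DecidablePred p] :
    (Finset.univ.filter fun x : Fin n => p x.val).card = Nat.count p n := by
  rw [Nat.count_eq_card_filter_range, ← Nat.Iio_eq_range, ← Fin.map_valEmbedding_univ,
    Finset.filter_map, Finset.card_map]
  rfl

section Circulant

open Fin.CommRing

lemma Fin.card_eq_count {n : ℕ} [NeZero n] (A : Finset (Fin n)) :
    A.card = Nat.count (fun i : ℕ => (i : Fin n) ∈ A) n := by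
  rw [← Fin.card_filter_val_eq_count]
  congr
  ext x
  simp

def jumpCirculant (n M : ℕ) [NeZero n] : SimpleGraph (Fin n) :=
  circulantGraph {(M : Fin n), (M : Fin n) + 1}

namespace JumpCirculant

/-- For `n = 2M(M+1)`: `M` blocks of `M` consecutive vertices, separated by gaps of `M + 1` and
one gap of `2M + 1` that wraps around `0`. -/
def blocks (n M : ℕ) : Finset (Fin n) := {x | M < x.val % (2 * M + 1)}

lemma card_blocks {n M : ℕ} (hn : n = 2 * M * (M + 1)) :
    (blocks n M).card = M * M := by
  rw [blocks, Fin.card_filter_val_eq_count (fun i => M < i % (2 * M + 1)), hn,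
    show 2 * M * (M + 1) = (2 * M + 1) * M + M by ring, Nat.count_add, Nat.count_mod_mul,
    Nat.count_lt_mod_two_mul_add_one,
    Nat.count_of_forall_not fun i hi => by rw [Nat.mul_add_mod, Nat.mod_eq_of_lt (by omega)]; omega,
    add_zero]

variable {n M : ℕ} [NeZero n]

lemma isIndepSet_iff (hM : 0 < M) (hMn : M + 1 < n) {A : Finset (Fin n)} :
    (jumpCirculant n M).IsIndepSet ↑A ↔ ∀ x ∈ A, x + M ∉ A ∧ x + (M + 1) ∉ A := by
  have hne : ∀ d, 0 < d → d < n → (d : Fin n) ≠ 0 := fun d hd hdn h =>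
    (Nat.eq_zero_of_dvd_of_lt (Fin.natCast_eq_zero.1 h) hdn).not_gt hd
  rw [jumpCirculant, isIndepSet_circulantGraph_iff]
  · simp [add_comm]
  · simp only [Set.mem_insert_iff, Set.mem_singleton_iff, not_or]
    exact ⟨(hne M hM (by omega)).symm, by exact_mod_cast (hne (M + 1) (by omega) hMn).symm⟩

lemma avoidsDiffs_of_isIndepSet (hM : 0 < M) (hMn : M + 1 < n) {A : Finset (Fin n)}
    (hA : (jumpCirculant n M).IsIndepSet ↑A) :
    AvoidsDiffs M (fun i : ℕ => (i : Fin n) ∈ A) := by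
  intro i hi
  simpa only [Nat.cast_add, Nat.cast_one, add_assoc] using (isIndepSet_iff hM hMn).1 hA _ hi

lemma count_window_le (hM : 0 < M) (hMn : M + 1 < n) {A : Finset (Fin n)}
    (hA : (jumpCirculant n M).IsIndepSet ↑A) (t : Fin n) :
    Nat.count (fun i : ℕ => t + i ∈ A) (2 * M + 1) ≤ M := by
  simpa using ((avoidsDiffs_of_isIndepSet hM hMn hA).shift t.val).count_two_mul_add_one_le

theorem card_le_of_isIndepSet (hM : 0 < M) (hn : n = 2 * M * (M + 1)) {A : Finset (Fin n)}
    (hA : (jumpCirculant n M).IsIndepSet ↑A) : A.card ≤ M * M := by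
  have hMn : M + 1 < n := by subst hn; nlinarith
  have hP : Function.Periodic (fun i : ℕ => (i : Fin n) ∈ A) n := fun i => by simp
  rw [Fin.card_eq_count]
  subst hn
  exact (avoidsDiffs_of_isIndepSet hM hMn hA).count_le_of_periodic hP

lemma isIndepSet_blocks (hM : 0 < M) (hn : n = 2 * M * (M + 1)) :
    (jumpCirculant n M).IsIndepSet ↑(blocks n M) := by
  have hMn : M + 1 < n := by subst hn; nlinarith
  -- a residue in `(M, 2M]` plus `M` or `M + 1` lands in `[0, M]` modulo `2M + 1`, also past `n`
  have key : ∀ x : Fin n, ∀ d, M ≤ d → d ≤ M + 1 → x ∈ blocks n M →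
      x + (d : Fin n) ∉ blocks n M := by
    intro x d hd1 hd2 hx
    simp only [blocks, Finset.mem_filter, Finset.mem_univ, true_and, not_lt] at hx ⊢
    have := Nat.mod_lt x.val (show 0 < 2 * M + 1 by omega)
    rw [Fin.val_add_eq_ite, Fin.val_cast_of_lt (by omega)]
    split_ifs with hwrap
    · exact (Nat.mod_le _ _).trans (by omega)
    · rw [← Nat.mod_add_mod, Nat.mod_eq_sub_mod (by omega), Nat.mod_eq_of_lt (by omega)]
      omega
  rw [isIndepSet_iff hM hMn]
  intro x hx
  exact ⟨key x M le_rfl (by omega) hx, by exact_mod_cast key x (M + 1) (by omega) le_rfl hx⟩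

lemma add_notMem_blocks (hM : 0 < M) (hn : n = 2 * M * (M + 1)) {j : ℕ} (hj : j < 2 * M + 1) :
    (((2 * M + 1) * M : ℕ) : Fin n) + j ∉ blocks n M := by
  have hn' : n = (2 * M + 1) * M + M := by rw [hn]; ring
  have hK : M + 1 ≤ (2 * M + 1) * M := by nlinarith
  simp only [blocks, Finset.mem_filter, Finset.mem_univ, true_and, not_lt]
  rw [Fin.val_add_eq_ite, Fin.val_cast_of_lt (by omega), Fin.val_cast_of_lt (by omega)]
  split_ifs with hwrap
  · exact (Nat.mod_le _ _).trans (by omega)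
  · rw [Nat.mul_add_mod]
    exact (Nat.mod_le _ _).trans (by omega)

/-- Put the first vertex into the gap of length `2M + 1` of the translate; each of the other two
then rules out at most `M` of these `2M + 1` positions. -/
lemma exists_translate_blocks_disjoint (hM : 0 < M) (hn : n = 2 * M * (M + 1))
    {T : Finset (Fin n)} (hT : T.card = 3) :
    ∃ u : Fin n, Disjoint ((blocks n M).map (Equiv.addRight u).toEmbedding) T := by
  classical
  have hMn : M + 1 < n := by subst hn; nlinarith
  obtain ⟨a, ha⟩ := Finset.card_pos.1 (show 0 < T.card by omega)
  set g : Fin n := (((2 * M + 1) * M : ℕ) : Fin n)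
  let bad : Fin n → Finset ℕ := fun x =>
    (Finset.range (2 * M + 1)).filter fun j => x - a + g + j ∈ blocks n M
  have hbad : ((T.erase a).biUnion bad).card < (Finset.range (2 * M + 1)).card := calc
    _ ≤ (T.erase a).card * M := Finset.card_biUnion_le_card_mul _ _ _ fun x _ => by
      rw [← Nat.count_eq_card_filter_range]
      exact count_window_le hM hMn (isIndepSet_blocks hM hn) _
    _ < _ := by rw [Finset.card_erase_of_mem ha, hT, Finset.card_range]; omega
  obtain ⟨j, hj, hjbad⟩ := Finset.exists_mem_notMem_of_card_lt_card hbad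
  refine ⟨a - g - j, Finset.disjoint_left.2 fun x hx hxT => ?_⟩
  rw [Finset.mem_map_equiv] at hx
  have hx' : x - a + g + j ∈ blocks n M := by
    convert hx using 1
    simp only [Equiv.addRight_symm, neg_sub, Equiv.coe_addRight]
    abel
  by_cases hxa : x = a
  · subst hxa
    exact add_notMem_blocks hM hn (Finset.mem_range.1 hj)
      (by simpa only [sub_self, zero_add] using hx')
  · exact hjbad (Finset.mem_biUnion.2
      ⟨x, Finset.mem_erase.2 ⟨hxa, hxT⟩, Finset.mem_filter.2 ⟨hj, hx'⟩⟩)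

theorem indepNum_eq (hM : 0 < M) (hn : n = 2 * M * (M + 1)) :
    _root_.indepNum (jumpCirculant n M) = M * M :=
  le_antisymm (indepNumOn_le fun _ _ hs => card_le_of_isIndepSet hM hn hs)
    (card_blocks hn ▸ card_le_indepNumOn (Set.subset_univ _) (isIndepSet_blocks hM hn))

theorem isStable (hM : 0 < M) (hn : n = 2 * M * (M + 1)) (l : ℕ) :
    IsStable (jumpCirculant n M) (l + 3) l := by
  refine isStable_of_forall_exists_disjoint (fun T hT => ?_) l
  obtain ⟨u, hu⟩ := exists_translate_blocks_disjoint hM hn hT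
  refine ⟨_, ?_, ?_, hu⟩
  · rw [Finset.coe_map]
    exact (isIndepSet_blocks hM hn).image_add_right_circulantGraph u
  · rw [Finset.card_map, card_blocks hn, indepNum_eq hM hn]

end JumpCirculant

end Circulant

lemma abs_sq_sub_half_le_sqrt (M : ℕ) :
    |((M * M : ℕ) : ℝ) - ((2 * M * (M + 1) : ℕ) : ℝ) / 2| ≤
      Real.sqrt (2 * M * (M + 1) : ℕ) := by
  rw [show ((M * M : ℕ) : ℝ) - ((2 * M * (M + 1) : ℕ) : ℝ) / 2 = -M by push_cast; ring,
    abs_neg, Nat.abs_cast]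
  exact Real.le_sqrt_of_sq_le (by push_cast; nlinarith)

open JumpCirculant in
theorem exists_stable_seq_asymptotically_tight (l : ℕ) :
    ∃ C : ℝ, 0 < C ∧ ∃ (n : ℕ → ℕ) (G : ∀ m : ℕ, SimpleGraph (Fin (n m))),
      Filter.Tendsto n Filter.atTop Filter.atTop ∧
      ∀ m : ℕ, IsStable (G m) (l + 3) l ∧
        |(_root_.indepNum (G m) : ℝ) - (n m : ℝ) / 2| ≤ C * Real.sqrt (n m) := by
  refine ⟨1, one_pos, fun m => 2 * (m + 1) * (m + 1 + 1), fun m => jumpCirculant _ (m + 1),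
    Filter.tendsto_atTop_mono (fun m => show m ≤ _ by nlinarith) Filter.tendsto_id,
    fun m => ⟨?_, ?_⟩⟩
  · exact isStable m.succ_pos rfl l
  · rw [indepNum_eq m.succ_pos rfl, one_mul]
    exact abs_sq_sub_half_le_sqrt (m + 1)
end

section
/- f_{s,s+t}(n) = n − t for all integers s, t, n with s > ⌊(n−t+1)/2⌋ and s+t ≤ n+1, where f_{s,s+t}(n) is the Erdős–Rogers function. -/
open SimpleGraph Set

/-- The largest size of a vertex subset of `G` inducing a `Kₛ`-free subgraph. -/
noncomputable def maxKsFreeSub (n s : ℕ) (G : SimpleGraph (Fin n)) : ℕ :=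
  sSup {m | ∃ S : Finset (Fin n), S.card = m ∧
    ∀ T : Finset (Fin n), T ⊆ S → ¬ G.IsNClique s T}

/-- The Erdős–Rogers function `f_{s,r}(n)`: the minimum over `K_r`-free graphs `G` on
`n` vertices of the largest size of a vertex set inducing a `Kₛ`-free subgraph. -/
noncomputable def erdosRogers (s r n : ℕ) : ℕ :=
  sInf {k | ∃ G : SimpleGraph (Fin n), G.CliqueFree r ∧ k = maxKsFreeSub n s G}

/-!
Lower bound: by Hajnal's lemma, the union `U` and intersection `I` of any family of maximum cliques
in a graph with clique number `ω` satisfy `|U| + |I| ≥ 2 ω`. So if there are fewer than `2 ω`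
vertices, all maximum cliques share a vertex, and deleting it lowers the clique number. A
`K_{s+t}`-free graph on `n ≤ 2 s + t - 2` vertices stays below twice its clique number while that
is at least `s`, so `t` deletions make it `K_s`-free.

Upper bound: the complete graph on `n` vertices minus a matching of `m = n + 1 - s - t` edges is
the pullback of a complete graph along the map merging matched vertices, which has `n - m` values.
It is `K_{s+t}`-free, and a vertex set is `K_s`-free iff it meets fewer than `s` fibres, hence has
at most `s - 1 + m = n - t` vertices.
-/

open Finset

namespace SimpleGraph

variable {α : Type*} {G : SimpleGraph α} {ω : ℕ}

theorem CliqueFreeOn.card_le_of_isClique {A : Set α} (hA : G.CliqueFreeOn A (ω + 1))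
    {C : Finset α} (hCA : ↑C ⊆ A) (hC : G.IsClique C) : #C ≤ ω := by
  by_contra! hlt
  obtain ⟨T, hTC, hT⟩ := exists_subset_card_eq hlt
  exact hA ((coe_subset.mpr hTC).trans hCA) ⟨hC.subset (coe_subset.mpr hTC), hT⟩

variable [DecidableEq α]

/-- One step of Hajnal's argument: `I ∪ (K ∩ U)` is a clique, so it has at most `ω` vertices. -/
theorem CliqueFreeOn.card_add_card_le_of_isNClique {A : Set α} (hA : G.CliqueFreeOn A (ω + 1))
    {I U K : Finset α} (hIU : I ⊆ U) (hUA : ↑U ⊆ A) (hKA : ↑K ⊆ A)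
    (hadj : ∀ x ∈ I, ∀ y ∈ U, x ≠ y → G.Adj x y) (hK : G.IsNClique ω K) :
    #U + #I ≤ #(U ∪ K) + #(I ∩ K) := by
  have hclique : G.IsClique ↑(I ∪ (K ∩ U)) := by
    intro x hx y hy hxy
    simp only [coe_union, coe_inter, Set.mem_union, Set.mem_inter_iff, mem_coe] at hx hy
    rcases hx with hxI | ⟨hxK, hxU⟩ <;> rcases hy with hyI | ⟨hyK, hyU⟩
    · exact hadj x hxI y (hIU hyI) hxy
    · exact hadj x hxI y hyU hxy
    · exact (hadj y hyI x hxU hxy.symm).symm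
    · exact hK.isClique hxK hyK hxy
  have hsub : ↑(I ∪ (K ∩ U)) ⊆ A := by
    rw [coe_union]
    exact Set.union_subset ((coe_subset.mpr hIU).trans hUA)
      ((coe_subset.mpr inter_subset_left).trans hKA)
  have hle := hA.card_le_of_isClique hsub hclique
  have hIKU : I ∩ (K ∩ U) = I ∩ K := by
    rw [← Finset.inter_assoc, Finset.inter_eq_left.mpr (Finset.inter_subset_left.trans hIU)]
  have h₁ := card_union_add_card_inter I (K ∩ U)
  have h₂ := card_union_add_card_inter U K
  rw [hIKU] at h₁
  rw [Finset.inter_comm] at h₂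
  have := hK.card_eq
  omega

/-- Hajnal's lemma. -/
theorem CliqueFreeOn.two_mul_le_card_sup_add_card_inf' {A : Set α}
    (hA : G.CliqueFreeOn A (ω + 1)) {𝒦 : Finset (Finset α)} (h𝒦 : 𝒦.Nonempty)
    (hcl : ∀ K ∈ 𝒦, ↑K ⊆ A ∧ G.IsNClique ω K) :
    2 * ω ≤ #(𝒦.sup id) + #(𝒦.inf' h𝒦 id) := by
  induction h𝒦 using Nonempty.cons_induction with
  | singleton K =>
    rw [sup_singleton, inf'_singleton, id, (hcl K (mem_singleton_self K)).2.card_eq]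
    omega
  | cons K 𝒦 hK h𝒦 ih =>
    rw [sup_cons, inf'_cons h𝒦]
    have hcl' : ∀ K ∈ 𝒦, ↑K ⊆ A ∧ G.IsNClique ω K := fun K' hK' => hcl K' (mem_cons_of_mem hK')
    obtain ⟨hKA, hKcl⟩ := hcl K (mem_cons_self K 𝒦)
    have hIU : 𝒦.inf' h𝒦 id ⊆ 𝒦.sup id :=
      (inf'_le id h𝒦.choose_spec).trans (le_sup (f := id) h𝒦.choose_spec)
    have hUA : ↑(𝒦.sup id) ⊆ A := by
      intro x hx
      obtain ⟨K', hK', hxK'⟩ := mem_sup.mp (mem_coe.mp hx)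
      exact (hcl' K' hK').1 hxK'
    have hadj : ∀ x ∈ 𝒦.inf' h𝒦 id, ∀ y ∈ 𝒦.sup id, x ≠ y → G.Adj x y := by
      intro x hx y hy hxy
      obtain ⟨K', hK', hyK'⟩ := mem_sup.mp hy
      exact (hcl' K' hK').2.isClique (inf'_le id hK' hx) hyK' hxy
    have := hA.card_add_card_le_of_isNClique hIU hUA hKA hadj hKcl
    change 2 * ω ≤ #(K ∪ 𝒦.sup id) + #(K ∩ 𝒦.inf' h𝒦 id)
    rw [Finset.union_comm, Finset.inter_comm]
    have := ih hcl'
    omega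

theorem CliqueFreeOn.exists_cliqueFreeOn_erase {A : Finset α} (hA : G.CliqueFreeOn ↑A (ω + 1))
    (hcard : #A < 2 * ω) (hne : A.Nonempty) : ∃ v ∈ A, G.CliqueFreeOn ↑(A.erase v) ω := by
  classical
  by_cases hfree : G.CliqueFreeOn ↑A ω
  · obtain ⟨v, hv⟩ := hne
    exact ⟨v, hv, hfree.subset G (Finset.coe_subset.mpr (erase_subset v A))⟩
  obtain ⟨K₀, hK₀A, hK₀⟩ : ∃ K₀ : Finset α, ↑K₀ ⊆ (↑A : Set α) ∧ G.IsNClique ω K₀ := by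
    simpa [CliqueFreeOn] using hfree
  set 𝒦 := A.powerset.filter (G.IsNClique ω)
  have hmem : ∀ K, K ∈ 𝒦 ↔ ↑K ⊆ (↑A : Set α) ∧ G.IsNClique ω K := by
    simp [𝒦]
  have hK₀𝒦 : K₀ ∈ 𝒦 := (hmem K₀).mpr ⟨hK₀A, hK₀⟩
  have h𝒦 : 𝒦.Nonempty := ⟨K₀, hK₀𝒦⟩
  have hbound := hA.two_mul_le_card_sup_add_card_inf' h𝒦 fun K hK => (hmem K).mp hK
  have hsup : #(𝒦.sup id) ≤ #A :=
    card_le_card (Finset.sup_le fun K hK => Finset.coe_subset.mp ((hmem K).mp hK).1)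
  obtain ⟨v, hv⟩ : (𝒦.inf' h𝒦 id).Nonempty := card_pos.mp (by omega)
  have hvK : ∀ K ∈ 𝒦, v ∈ K := fun K hK => inf'_le id hK hv
  refine ⟨v, Finset.coe_subset.mp hK₀A (hvK K₀ hK₀𝒦), fun T hT hTcl => ?_⟩
  have hTA : ↑T ⊆ (↑A : Set α) := hT.trans (Finset.coe_subset.mpr (erase_subset _ _))
  exact notMem_erase v A (hT (hvK T ((hmem T).mpr ⟨hTA, hTcl⟩)))

theorem exists_cliqueFreeOn_of_card_add_two_le {s : ℕ} (hs : 1 ≤ s) (t : ℕ) {A : Finset α}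
    (hA : G.CliqueFreeOn ↑A (s + t)) (hcard : #A + 2 ≤ 2 * s + t) :
    ∃ S ⊆ A, #A ≤ #S + t ∧ G.CliqueFreeOn ↑S s := by
  induction t generalizing A with
  | zero => exact ⟨A, subset_rfl, le_rfl, hA⟩
  | succ t ih =>
    obtain rfl | hne := A.eq_empty_or_nonempty
    · exact ⟨∅, subset_rfl, by simp, by simpa using Nat.one_le_iff_ne_zero.mp hs⟩
    obtain ⟨v, hv, hfree⟩ := hA.exists_cliqueFreeOn_erase (ω := s + t) (by omega) hne
    have hcard' := card_erase_of_mem hv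
    obtain ⟨S, hS, hAS, hSfree⟩ := ih hfree (by omega)
    exact ⟨S, hS.trans (erase_subset v A), by omega, hSfree⟩

end SimpleGraph

theorem Finset.card_add_card_image_le {α β : Type*} [DecidableEq α] [DecidableEq β] (f : α → β)
    {S A : Finset α} (hSA : S ⊆ A) : #S + #(A.image f) ≤ #(S.image f) + #A := by
  have hA : #(A.image f) ≤ #(S.image f) + #(A \ S) := by
    calc #(A.image f) = #(S.image f ∪ (A \ S).image f) := by
          rw [← image_union, union_sdiff_of_subset hSA]
      _ ≤ #(S.image f) + #((A \ S).image f) := card_union_le _ _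
      _ ≤ #(S.image f) + #(A \ S) := Nat.add_le_add_left card_image_le _
  have := card_sdiff_add_card_eq_card hSA
  omega

namespace SimpleGraph

variable {α β : Type*} (f : α → β)

theorem isClique_comap_top_iff {s : Set α} :
    ((⊤ : SimpleGraph β).comap f).IsClique s ↔ s.InjOn f := by
  simp only [IsClique, Set.Pairwise, comap_adj, top_adj, Set.InjOn]
  exact forall₂_congr fun x _ => forall₂_congr fun y _ => not_imp_not

variable [DecidableEq β]

theorem cliqueFreeOn_comap_top_iff {S : Finset α} {k : ℕ} :
    ((⊤ : SimpleGraph β).comap f).CliqueFreeOn ↑S k ↔ #(S.image f) < k := by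
  constructor
  · intro hS
    by_contra! hk
    obtain ⟨B, hB, hBk⟩ := exists_subset_card_eq hk
    obtain ⟨T, hTS, hinj, rfl⟩ := exists_subset_injOn_image_eq_of_surjOn (f := f) (↑S) B
      fun b hb => by simpa using hB hb
    rw [card_image_of_injOn hinj] at hBk
    exact hS hTS ⟨(isClique_comap_top_iff f).mpr hinj, hBk⟩
  · intro hk T hTS hT
    have hinj := (isClique_comap_top_iff f).mp hT.isClique
    have := Finset.card_le_card (image_subset_image (f := f) (coe_subset.mp hTS))
    rw [card_image_of_injOn hinj, hT.card_eq] at this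
    omega

theorem cliqueFree_comap_top_iff [Fintype α] {k : ℕ} :
    ((⊤ : SimpleGraph β).comap f).CliqueFree k ↔ #(Finset.univ.image f) < k := by
  rw [← cliqueFreeOn_univ, ← coe_univ, cliqueFreeOn_comap_top_iff]

end SimpleGraph

section MaxKsFreeSub

variable {n s : ℕ} {G : SimpleGraph (Fin n)}

theorem le_maxKsFreeSub {S : Finset (Fin n)} (hS : G.CliqueFreeOn ↑S s) :
    #S ≤ maxKsFreeSub n s G := by
  refine le_csSup ⟨n, ?_⟩ ⟨S, rfl, fun T hT => hS (coe_subset.mpr hT)⟩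
  rintro _ ⟨S', rfl, -⟩
  simpa using card_le_univ S'

theorem maxKsFreeSub_le {k : ℕ} (h : ∀ S : Finset (Fin n), G.CliqueFreeOn ↑S s → #S ≤ k) :
    maxKsFreeSub n s G ≤ k := by
  refine csSup_le' ?_
  rintro _ ⟨S, rfl, hS⟩
  exact h S fun T hT => hS T (coe_subset.mp hT)

variable {r : ℕ}

theorem erdosRogers_le (hG : G.CliqueFree r) : erdosRogers s r n ≤ maxKsFreeSub n s G :=
  Nat.sInf_le ⟨G, hG, rfl⟩

theorem le_erdosRogers {k : ℕ} (hne : ∃ G : SimpleGraph (Fin n), G.CliqueFree r)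
    (h : ∀ G : SimpleGraph (Fin n), G.CliqueFree r → k ≤ maxKsFreeSub n s G) :
    k ≤ erdosRogers s r n := by
  obtain ⟨G₀, hG₀⟩ := hne
  refine le_csInf ⟨_, G₀, hG₀, rfl⟩ ?_
  rintro _ ⟨G, hG, rfl⟩
  exact h G hG

end MaxKsFreeSub

/-- `pairUp m` merges `2 i` and `2 i + 1` for `i < m` and is injective on the other numbers. -/
def pairUp (m x : ℕ) : ℕ := if x < 2 * m then x / 2 else x - m

theorem pairUp_lt {m c x : ℕ} (hc : 2 * m ≤ c) (hx : x < c) : pairUp m x < c - m := by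
  unfold pairUp
  split_ifs <;> omega

theorem image_pairUp_univ {m n : ℕ} (hn : 2 * m ≤ n) :
    Finset.univ.image (fun x : Fin n => pairUp m x) = range (n - m) := by
  ext y
  simp only [Finset.mem_image, Finset.mem_univ, true_and, Finset.mem_range]
  refine ⟨fun ⟨x, hx⟩ => hx ▸ pairUp_lt hn x.isLt, fun hy => ?_⟩
  by_cases hym : y < m
  · exact ⟨⟨2 * y, by omega⟩, by simp [pairUp]; omega⟩
  · exact ⟨⟨y + m, by omega⟩, by simp [pairUp]; omega⟩

def completeMinusMatching (m n : ℕ) : SimpleGraph (Fin n) :=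
  (⊤ : SimpleGraph ℕ).comap fun x : Fin n => pairUp m x

theorem completeMinusMatching_cliqueFree {m n : ℕ} (hn : 2 * m ≤ n) :
    (completeMinusMatching m n).CliqueFree (n - m + 1) := by
  rw [completeMinusMatching, cliqueFree_comap_top_iff, image_pairUp_univ hn, card_range]
  exact Nat.lt_succ_self _

theorem maxKsFreeSub_completeMinusMatching {m n s : ℕ} (hm : m ≤ s) (hn : s + m ≤ n) :
    maxKsFreeSub n (s + 1) (completeMinusMatching m n) = s + m := by
  refine le_antisymm (maxKsFreeSub_le fun S hS => ?_) ?_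
  · rw [completeMinusMatching, cliqueFreeOn_comap_top_iff] at hS
    have := card_add_card_image_le (fun x : Fin n => pairUp m x) (subset_univ S)
    rw [image_pairUp_univ (by omega), card_range, card_univ, Fintype.card_fin] at this
    omega
  · let S : Finset (Fin n) := univ.filter fun x => (x : ℕ) < s + m
    have hS : (completeMinusMatching m n).CliqueFreeOn ↑S (s + 1) := by
      rw [completeMinusMatching, cliqueFreeOn_comap_top_iff, Nat.lt_succ_iff]
      calc #(S.image fun x : Fin n => pairUp m x) ≤ #(range (s + m - m)) :=
            card_le_card fun y hy => by
              obtain ⟨x, hx, rfl⟩ := Finset.mem_image.mp hy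
              exact Finset.mem_range.mpr (pairUp_lt (by omega) (mem_filter.mp hx).2)
        _ = s := by simp
    have := le_maxKsFreeSub hS
    rwa [Fin.card_filter_val_lt, min_eq_right hn] at this

theorem le_maxKsFreeSub_of_cliqueFree {n s t : ℕ} {G : SimpleGraph (Fin n)} (hs : 1 ≤ s)
    (hG : G.CliqueFree (s + t)) (hn : n + 2 ≤ 2 * s + t) : n - t ≤ maxKsFreeSub n s G := by
  obtain ⟨S, -, hcard, hS⟩ :=
    exists_cliqueFreeOn_of_card_add_two_le hs t (A := Finset.univ) hG.cliqueFreeOn (by simpa)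
  have := le_maxKsFreeSub hS
  rw [Finset.card_univ, Fintype.card_fin] at hcard
  omega

theorem erdosRogers_eq (s t n : ℕ) (h1 : (n - t + 1) / 2 < s) (h2 : s + t ≤ n + 1) :
    erdosRogers s (s + t) n = n - t := by
  obtain ⟨s, rfl⟩ : ∃ s', s = s' + 1 := ⟨s - 1, by omega⟩
  have hG : (completeMinusMatching (n - s - t) n).CliqueFree (s + 1 + t) :=
    (completeMinusMatching_cliqueFree (by omega)).mono (by omega)
  refine le_antisymm ?_ (le_erdosRogers ⟨_, hG⟩ fun G hG =>
    le_maxKsFreeSub_of_cliqueFree (by omega) hG (by omega))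
  calc erdosRogers (s + 1) (s + 1 + t) n
      ≤ maxKsFreeSub n (s + 1) (completeMinusMatching (n - s - t) n) := erdosRogers_le hG
    _ = n - t := by rw [maxKsFreeSub_completeMinusMatching (by omega) (by omega)]; omega
end

section
/- If G is a tight (1,0)-stable graph on n = 2k vertices, then every vertex of G has degree at most k. -/
open SimpleGraph Set

/-!
A vertex `v` of degree at least `k + 1` lies in no independent set of size `k`, since such a
set and the neighbours of `v` would have to share one of the `2k` vertices. So `G - v` has
`2k - 1` vertices, independence number `k`, and each of its vertices is missed by some maximum
independent set. In such a graph every independent set `A` has at least `|A|` neighbours, by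
strong induction on `|A|`: for `u ∈ A` and a maximum independent set `T` avoiding `u`, the
induction hypothesis handles `A ∩ T`, and exchanging `A \ T` into `T` handles the rest. Applied
to a maximum independent set this gives `2α ≤ n`, which fails for `G - v`.
-/

namespace SimpleGraph

variable {V : Type*} (G : SimpleGraph V)

def nbhd (A : Set V) : Set V := {x | ∃ a ∈ A, G.Adj a x}

variable {G}

theorem nbhd_mono {A B : Set V} (h : A ⊆ B) : G.nbhd A ⊆ G.nbhd B :=
  fun _ ⟨a, ha, hadj⟩ => ⟨a, h ha, hadj⟩

theorem IsIndepSet.disjoint_nbhd_of_subset {T B : Set V} (hT : G.IsIndepSet T) (hB : B ⊆ T) :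
    Disjoint (G.nbhd B) T := by
  rw [Set.disjoint_left]
  rintro x ⟨b, hb, hadj⟩ hx
  exact hT (hB hb) hx hadj.ne hadj

theorem IsIndepSet.ncard_add_ncard_neighborSet_le [Finite V] {T : Set V} (hT : G.IsIndepSet T)
    {v : V} (hv : v ∈ T) : T.ncard + (G.neighborSet v).ncard ≤ Nat.card V := by
  have hdisj : Disjoint T (G.neighborSet v) :=
    Set.disjoint_left.mpr fun _ hx hadj => hT hv hx (G.ne_of_adj hadj) hadj
  rw [← ncard_union_eq hdisj]
  exact ncard_le_card _

end SimpleGraph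

section indepNumOn

variable {V : Type*} [Finite V] (G : SimpleGraph V)

theorem bddAbove_indepNumOn_set (U : Set V) :
    BddAbove {n | ∃ s : Finset V, ↑s ⊆ U ∧ s.card = n ∧
      ∀ x ∈ s, ∀ y ∈ s, x ≠ y → ¬ G.Adj x y} := by
  have := Fintype.ofFinite V
  exact ⟨Fintype.card V, fun _ ⟨s, _, hs, _⟩ => hs ▸ s.card_le_univ⟩

theorem ncard_le_indepNumOn {U s : Set V} (hsU : s ⊆ U) (hs : G.IsIndepSet s) :
    s.ncard ≤ indepNumOn G U := by
  have hfin := s.toFinite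
  rw [ncard_eq_toFinset_card s hfin]
  refine le_csSup (bddAbove_indepNumOn_set G U) ⟨hfin.toFinset, by simpa, rfl, ?_⟩
  intro x hx y hy hxy
  exact hs (hfin.mem_toFinset.mp hx) (hfin.mem_toFinset.mp hy) hxy

theorem exists_isIndepSet_ncard_eq_indepNumOn (U : Set V) :
    ∃ s ⊆ U, G.IsIndepSet s ∧ s.ncard = indepNumOn G U := by
  obtain ⟨s, hsU, hcard, hs⟩ :=
    Nat.sSup_mem (by exact ⟨0, ∅, by simp, rfl, by simp⟩) (bddAbove_indepNumOn_set G U)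
  exact ⟨s, hsU, fun x hx y hy => hs x hx y hy, by rw [ncard_coe_finset, hcard]; rfl⟩

theorem indepNumOn_mono {U W : Set V} (h : U ⊆ W) : indepNumOn G U ≤ indepNumOn G W := by
  obtain ⟨s, hsU, hs, hcard⟩ := exists_isIndepSet_ncard_eq_indepNumOn G U
  exact hcard ▸ ncard_le_indepNumOn G (hsU.trans h) hs

variable {G}

/-- Exchange argument: `(T \ N(A)) ∪ (A \ T)` is again independent. -/
theorem ncard_sdiff_le_ncard_inter_nbhd {U A T : Set V} (hAU : A ⊆ U) (hA : G.IsIndepSet A)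
    (hTU : T ⊆ U) (hT : G.IsIndepSet T) (hTmax : T.ncard = indepNumOn G U) :
    (A \ T).ncard ≤ (T ∩ G.nbhd A).ncard := by
  have hexch : G.IsIndepSet ((T \ G.nbhd A) ∪ (A \ T)) := by
    rintro x (⟨hxT, hxN⟩ | ⟨hxA, -⟩) y (⟨hyT, hyN⟩ | ⟨hyA, -⟩) hxy hadj
    · exact hT hxT hyT hxy hadj
    · exact hxN ⟨y, hyA, hadj.symm⟩
    · exact hyN ⟨x, hxA, hadj⟩
    · exact hA hxA hyA hxy hadj
  have hle := ncard_le_indepNumOn G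
    (union_subset (sdiff_subset.trans hTU) (sdiff_subset.trans hAU)) hexch
  have hdisj : Disjoint (T \ G.nbhd A) (A \ T) :=
    Set.disjoint_left.mpr fun _ hx hx' => hx'.2 hx.1
  rw [ncard_union_eq hdisj, ← hTmax, ← ncard_inter_add_ncard_sdiff_eq_ncard T (G.nbhd A)] at hle
  omega

theorem ncard_le_ncard_nbhd_inter {U : Set V}
    (hcore : ∀ u ∈ U, indepNumOn G (U \ {u}) = indepNumOn G U) :
    ∀ A ⊆ U, G.IsIndepSet A → A.ncard ≤ (G.nbhd A ∩ U).ncard := by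
  suffices ∀ n, ∀ A ⊆ U, G.IsIndepSet A → A.ncard = n → A.ncard ≤ (G.nbhd A ∩ U).ncard from
    fun A hAU hA => this _ A hAU hA rfl
  intro n
  induction n using Nat.strong_induction_on with
  | _ n ih =>
    intro A hAU hA hn
    obtain rfl | ⟨u, huA⟩ := A.eq_empty_or_nonempty
    · simp
    obtain ⟨T, hTU', hT, hTmax⟩ := exists_isIndepSet_ncard_eq_indepNumOn G (U \ {u})
    rw [hcore u (hAU huA)] at hTmax
    have hTU : T ⊆ U := hTU'.trans sdiff_subset
    have huT : u ∉ T := fun h => (hTU' h).2 rfl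
    have hinter : (A ∩ T).ncard ≤ (G.nbhd (A ∩ T) ∩ U).ncard :=
      ih _ (hn ▸ ncard_lt_ncard ⟨inter_subset_left, fun h => huT (h huA).2⟩) _
        (inter_subset_left.trans hAU) (hA.mono inter_subset_left) rfl
    have hdiff := ncard_sdiff_le_ncard_inter_nbhd hAU hA hTU hT hTmax
    have hdisj : Disjoint (G.nbhd (A ∩ T) ∩ U) (T ∩ G.nbhd A) :=
      ((hT.disjoint_nbhd_of_subset inter_subset_right).mono inter_subset_left
        inter_subset_left)
    have hsub : (G.nbhd (A ∩ T) ∩ U) ∪ (T ∩ G.nbhd A) ⊆ G.nbhd A ∩ U :=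
      union_subset (inter_subset_inter_left _ (nbhd_mono inter_subset_left))
        fun x hx => ⟨hx.2, hTU hx.1⟩
    have hunion := ncard_le_ncard hsub
    rw [ncard_union_eq hdisj] at hunion
    have hsplit := ncard_inter_add_ncard_sdiff_eq_ncard A T
    omega

theorem two_mul_indepNumOn_le_ncard {U : Set V}
    (hcore : ∀ u ∈ U, indepNumOn G (U \ {u}) = indepNumOn G U) :
    2 * indepNumOn G U ≤ U.ncard := by
  obtain ⟨S, hSU, hS, hSmax⟩ := exists_isIndepSet_ncard_eq_indepNumOn G U
  have hhall := ncard_le_ncard_nbhd_inter hcore S hSU hS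
  have hdisj : Disjoint S (G.nbhd S ∩ U) :=
    (hS.disjoint_nbhd_of_subset subset_rfl).symm.mono_right inter_subset_left
  have hle := ncard_le_ncard (union_subset hSU (inter_subset_right : G.nbhd S ∩ U ⊆ U))
  rw [ncard_union_eq hdisj] at hle
  omega

end indepNumOn

theorem tight_one_zero_maxDegree_le_general {V : Type*} [Fintype V] (G : SimpleGraph V) (k : ℕ)
    (hcard : Fintype.card V = 2 * k)
    (hstable : ∀ v : V, indepNumOn G ({v} : Set V)ᶜ = k) :
    ∀ v : V, (G.neighborSet v).ncard ≤ k := by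
  intro v
  by_contra! hdeg
  rw [← Nat.card_eq_fintype_card] at hcard
  have hv_notMem : ∀ T : Set V, G.IsIndepSet T → T.ncard = k → v ∉ T := fun T hT hTk hv => by
    have := hT.ncard_add_ncard_neighborSet_le hv
    omega
  have hcore : ∀ u ∈ ({v} : Set V)ᶜ,
      indepNumOn G (({v} : Set V)ᶜ \ {u}) = indepNumOn G ({v} : Set V)ᶜ := by
    intro u _
    obtain ⟨T, hTu, hT, hTk⟩ := exists_isIndepSet_ncard_eq_indepNumOn G ({u} : Set V)ᶜ
    rw [hstable] at hTk ⊢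
    refine le_antisymm (hstable v ▸ indepNumOn_mono G sdiff_subset) (hTk ▸ ?_)
    refine ncard_le_indepNumOn G (fun x hx => ⟨?_, hTu hx⟩) hT
    rintro rfl
    exact hv_notMem T hT hTk hx
  have hhalf := two_mul_indepNumOn_le_ncard hcore
  have hsplit := ncard_add_ncard_compl ({v} : Set V)
  rw [hstable] at hhalf
  rw [ncard_singleton] at hsplit
  omega

theorem tight_one_zero_maxDegree_le {V : Type*} [Fintype V] (G : SimpleGraph V) (k : ℕ)
    (hcard : Fintype.card V = 2 * k) (halpha : _root_.indepNum G = k)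
    (hstable : ∀ v : V, indepNumOn G ({v} : Set V)ᶜ = k) :
    ∀ v : V, (G.neighborSet v).ncard ≤ k :=
  tight_one_zero_maxDegree_le_general G k hcard hstable
end
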